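/- arXiv:1308.4901 — 3 statements merged into one kernel-verified Lean document; each statement's English description precedes it below -/
import Mathlib

section
/- Suppose Φ satisfies Assumption (A1) and γ² > 4 max_k Φ̂(k). Then the functions Â¹ and Â² belong to C¹([0,∞)×𝕋), and there exists c₀ > 0 such that for i = 1,2, all t ≥ 0 and all k: |Â^i_t(k)| ≤ c₀ e^{−δ₀ t}, |∂_t Â^i_t(k)| ≤ c₀ e^{−δ₀ t}, and |∂_k Â^i_t(k)| ≤ c₀ e^{−δ₀ t/2}, where δ₀ := ω₀²/γ. -/
open Real MeasureTheory Matrix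
open scoped BigOperators

noncomputable section

/-- Centered representative of an element of the cyclic lattice `Λ_L`. -/
def zrep (L : ℕ) (x : ZMod L) : ℤ :=
  if (x.val : ℤ) ≤ (L : ℤ) / 2 then (x.val : ℤ) else (x.val : ℤ) - (L : ℤ)

/-- Fourier transform of the (symmetric, real) interaction `Φ`. -/
def phiHat (Φ : ℤ → ℝ) (k : ℝ) : ℝ := ∑' x : ℤ, Φ x * Real.cos (2 * π * k * (x : ℝ))

/-- Assumption (A1): exponential decay, symmetry, and pinning with constant `ω₀`. -/
def AssumptionA1 (Φ : ℤ → ℝ) (ω₀ : ℝ) : Prop :=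
  (∃ C > (0:ℝ), ∃ δ > (0:ℝ), ∀ x : ℤ, |Φ x| ≤ C * Real.exp (-δ * |(x : ℝ)|)) ∧
  (∀ x : ℤ, Φ (-x) = Φ x) ∧ 0 < ω₀ ∧ ∀ k : ℝ, ω₀ ^ 2 ≤ phiHat Φ k

/-- `max_k Φ̂(k)`. -/
def supPhiHat (Φ : ℤ → ℝ) : ℝ := ⨆ k : ℝ, phiHat Φ k

def uFun (Φ : ℤ → ℝ) (γ k : ℝ) : ℝ := Real.sqrt ((γ / 2) ^ 2 - phiHat Φ k)
def muP (Φ : ℤ → ℝ) (γ k : ℝ) : ℝ := γ / 2 + uFun Φ γ k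
def muM (Φ : ℤ → ℝ) (γ k : ℝ) : ℝ := γ / 2 - uFun Φ γ k

/-- `Â¹_t(k)`. -/
def Ahat1 (Φ : ℤ → ℝ) (γ t k : ℝ) : ℝ :=
  phiHat Φ k * (Real.exp (-(t * muP Φ γ k)) - Real.exp (-(t * muM Φ γ k))) / (2 * uFun Φ γ k)

/-- `Â²_t(k)`. -/
def Ahat2 (Φ : ℤ → ℝ) (γ t k : ℝ) : ℝ :=
  (muP Φ γ k * Real.exp (-(t * muP Φ γ k)) - muM Φ γ k * Real.exp (-(t * muM Φ γ k)))
    / (2 * uFun Φ γ k)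

/-- Noise domination: `γ² > 4 max_k Φ̂(k)`. -/
def NoiseDom (Φ : ℤ → ℝ) (γ : ℝ) : Prop := 4 * supPhiHat Φ < γ ^ 2

/-- Nondegeneracy of the harmonic forces. -/
def NonDeg (Φ : ℤ → ℝ) (γ : ℝ) : Prop :=
  ∀ ε > (0:ℝ), ∃ Cε > (0:ℝ), ∀ k₀ : ℝ, ε ≤ |k₀| → |k₀| ≤ 1 / 2 →
    Cε ≤ ∫ t in Set.Ioi (0 : ℝ),
        ∫ k in (0:ℝ)..1, (Ahat2 Φ γ t (k + k₀ / 2) - Ahat2 Φ γ t (k - k₀ / 2)) ^ 2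

/-- Assumption (A2). -/
def AssumptionA2 (Φ : ℤ → ℝ) (γ : ℝ) : Prop := NoiseDom Φ γ ∧ NonDeg Φ γ

/-- A dual lattice point `k ∈ Λ_L* ⊂ (-1/2,1/2]`, as a real number. -/
def dualPt (L : ℕ) (κ : ZMod L) : ℝ := (zrep L κ : ℝ) / (L : ℝ)

/-- `A²_{t,x} = ∫_{Λ_L*} dk e^{i2πk·x} Â²_t(k)` (real, by symmetry of `Â²`). -/
def latA2 (Φ : ℤ → ℝ) (γ : ℝ) (L : ℕ) [NeZero L] (t : ℝ) (x : ZMod L) : ℝ :=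
  (L : ℝ)⁻¹ * ∑ κ : ZMod L,
    Real.cos (2 * π * dualPt L κ * (zrep L x : ℝ)) * Ahat2 Φ γ t (dualPt L κ)

/-- The memory kernel `p_{t,x} := 2γ (A²_{t,x})²`. -/
def pKer (Φ : ℤ → ℝ) (γ : ℝ) (L : ℕ) [NeZero L] (t : ℝ) (x : ZMod L) : ℝ :=
  2 * γ * (latA2 Φ γ L t x) ^ 2

/-- The periodized interaction matrix `Φ_L`. -/
def PhiL (Φ : ℤ → ℝ) (L : ℕ) : Matrix (ZMod L) (ZMod L) ℝ :=
  fun x' x => ∑' n : ℤ, Φ (zrep L (x' - x) + n * (L : ℤ))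

/-- `M_γ = [[0, Φ_L],[−1, γ·1]]` in block form. -/
def Mgam (Φ : ℤ → ℝ) (γ : ℝ) (L : ℕ) :
    Matrix (Fin 2 × ZMod L) (Fin 2 × ZMod L) ℝ :=
  fun p q =>
    if p.1 = 0 then (if q.1 = 0 then 0 else PhiL Φ L p.2 q.2)
    else (if q.1 = 0 then -(if p.2 = q.2 then 1 else 0)
          else γ * (if p.2 = q.2 then 1 else 0))

/-- `𝒢_L = diag(Φ_L, 1)`. -/
def GLmat (Φ : ℤ → ℝ) (L : ℕ) :
    Matrix (Fin 2 × ZMod L) (Fin 2 × ZMod L) ℝ :=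
  fun p q =>
    if p.1 = 0 then (if q.1 = 0 then PhiL Φ L p.2 q.2 else 0)
    else (if q.1 = 0 then 0 else (if p.2 = q.2 then 1 else 0))

/-- The translate `Γ_x` of the initial second-moment matrix. -/
def transMat (L : ℕ) (Γ : Matrix (Fin 2 × ZMod L) (Fin 2 × ZMod L) ℝ) (x : ZMod L) :
    Matrix (Fin 2 × ZMod L) (Fin 2 × ZMod L) ℝ :=
  fun p q => Γ (p.1, x + p.2) (q.1, x + q.2)

/-- The source term `g_{t,x} = (e^{−tM_γᵀ} Γ_x e^{−tM_γ})^{22}_{0,0}`. -/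
def gSrc (Φ : ℤ → ℝ) (γ : ℝ) (L : ℕ) [NeZero L]
    (Γ : Matrix (Fin 2 × ZMod L) (Fin 2 × ZMod L) ℝ) (t : ℝ) (x : ZMod L) : ℝ :=
  (NormedSpace.exp ((-t) • (Mgam Φ γ L)ᵀ) * transMat L Γ x *
    NormedSpace.exp ((-t) • Mgam Φ γ L)) (1, 0) (1, 0)

/-- Mean energy density `𝓔 = (2L)⁻¹ Tr(𝒢_L Γ)`. -/
def EDen (Φ : ℤ → ℝ) (L : ℕ) [NeZero L]
    (Γ : Matrix (Fin 2 × ZMod L) (Fin 2 × ZMod L) ℝ) : ℝ :=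
  (2 * (L : ℝ))⁻¹ * Matrix.trace (GLmat Φ L * Γ)

/-- `T` is a continuous solution of the renewal equation (extended by `0` to `t<0`). -/
def IsTempSol (Φ : ℤ → ℝ) (γ : ℝ) (L : ℕ) [NeZero L]
    (Γ : Matrix (Fin 2 × ZMod L) (Fin 2 × ZMod L) ℝ) (T : ℝ → ZMod L → ℝ) : Prop :=
  (∀ x, ContinuousOn (fun t => T t x) (Set.Ici 0)) ∧
  (∀ t < (0:ℝ), ∀ x, T t x = 0) ∧
  ∀ t ≥ (0:ℝ), ∀ x : ZMod L, T t x = gSrc Φ γ L Γ t x +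
    ∫ s in (0:ℝ)..t, ∑ y : ZMod L, pKer Φ γ L s y * T (t - s) (x - y)

/-- `p̃_x := (γ/2)∫₀^∞ p_{s,x} ds`. -/
def ptil (Φ : ℤ → ℝ) (γ : ℝ) (L : ℕ) [NeZero L] (x : ZMod L) : ℝ :=
  γ / 2 * ∫ s in Set.Ioi (0:ℝ), pKer Φ γ L s x

/-- The lattice diffusion operator `D`, as a matrix. -/
def Dmat (Φ : ℤ → ℝ) (γ : ℝ) (L : ℕ) [NeZero L] : Matrix (ZMod L) (ZMod L) ℝ :=
  fun x z => ∑ y : ZMod L, ptil Φ γ L y *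
    ((if z = x then 2 else 0) - (if z = x + y then 1 else 0) - (if z = x - y then 1 else 0))

/-- `κ_L := Σ_y y² p̃_y`. -/
def kappaL (Φ : ℤ → ℝ) (γ : ℝ) (L : ℕ) [NeZero L] : ℝ :=
  ∑ y : ZMod L, (zrep L y : ℝ) ^ 2 * ptil Φ γ L y


/-!
Both kernels depend on `k` only through `Φ̂(k)`, which by the exponential decay of `Φ` is `C¹`
with bounded derivative. With `μ± = γ/2 ± u`, noise domination gives a uniform gap
`μ₊ - μ₋ = 2u ≥ 2√(γ²/4 - max Φ̂) > 0`, so the division by `2u` only costs a constant and every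
term is a bounded multiple of `e^{-tμ₋}`. Since `μ₋ μ₊ = Φ̂ ≥ ω₀²` and `μ₊ ≤ γ`, the slow rate
satisfies `μ₋ ≥ ω₀²/γ = δ₀`. Differentiating in `k` brings down a factor `t`, which is absorbed
by `t e^{-δ₀t} ≤ (2/δ₀) e^{-δ₀t/2}`.
-/

lemma abs_mul_exp_sub_mul_exp_le {a b c d K t : ℝ} (ht : 0 ≤ t) (hba : b ≤ a)
    (hc : 0 ≤ c) (hcK : c ≤ K) (hd : 0 ≤ d) (hdK : d ≤ K) :
    |c * Real.exp (-(t * a)) - d * Real.exp (-(t * b))| ≤ K * Real.exp (-(t * b)) := by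
  have hexp : Real.exp (-(t * a)) ≤ Real.exp (-(t * b)) :=
    Real.exp_le_exp.mpr (neg_le_neg (mul_le_mul_of_nonneg_left hba ht))
  have ha := Real.exp_pos (-(t * a))
  have hb := Real.exp_pos (-(t * b))
  rw [abs_sub_le_iff]
  constructor <;> nlinarith

lemma abs_deriv_div_le {f g : ℝ → ℝ} {f' g' x m A B C e : ℝ} (hf : HasDerivAt f f' x)
    (hg : HasDerivAt g g' x) (hm : 0 < m) (hgx : m ≤ g x) (hfx : |f x| ≤ A * e)
    (hf' : |f'| ≤ B * e) (hg' : |g'| ≤ C) :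
    |deriv (fun y => f y / g y) x| ≤ (B / m + A * C / m ^ 2) * e := by
  have hg0 : 0 < g x := hm.trans_le hgx
  have hdiv : HasDerivAt (fun y => f y / g y) _ x := hf.div hg hg0.ne'
  rw [hdiv.deriv]
  have hsplit : (f' * g x - f x * g') / g x ^ 2 = f' / g x - f x * g' / g x ^ 2 := by
    field_simp
  have hC : 0 ≤ C := (abs_nonneg _).trans hg'
  have hAe : 0 ≤ A * e := (abs_nonneg _).trans hfx
  have hBe : 0 ≤ B * e := (abs_nonneg _).trans hf'
  calc |(f' * g x - f x * g') / g x ^ 2|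
      ≤ |f'| / |g x| + |f x| * |g'| / |g x| ^ 2 := by
        rw [hsplit, ← abs_div, ← abs_mul, ← abs_pow, ← abs_div]
        exact abs_sub _ _
    _ ≤ B * e / m + A * e * C / m ^ 2 := by
        rw [abs_of_pos hg0]
        gcongr
    _ = (B / m + A * C / m ^ 2) * e := by ring

lemma one_add_mul_exp_neg_le {δ t : ℝ} (hδ : 0 < δ) (ht : 0 ≤ t) :
    (1 + t) * Real.exp (-δ * t) ≤ (1 + 2 / δ) * Real.exp (-δ * t / 2) := by
  set y := Real.exp (-δ * t / 2)
  have hy : 0 < y := Real.exp_pos _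
  have hy1 : y ≤ 1 := Real.exp_le_one_iff.mpr (by nlinarith)
  have hsq : Real.exp (-δ * t) = y * y := by rw [← Real.exp_add]; ring_nf
  have hty : t * y ≤ 2 / δ := by
    have hinv : Real.exp (δ * t / 2) * y = 1 := by rw [← Real.exp_add]; ring_nf; simp
    have := Real.add_one_le_exp (δ * t / 2)
    rw [le_div_iff₀ hδ]
    nlinarith
  rw [hsq]
  nlinarith

lemma hasDerivAt_exp_neg_mul (a t : ℝ) :
    HasDerivAt (fun s => Real.exp (-(s * a))) (-(a * Real.exp (-(t * a)))) t :=
  ((hasDerivAt_mul_const a).neg.exp).congr_deriv (by simp only [Pi.neg_apply]; ring)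

lemma hasDerivAt_exp_neg_const_mul {μ : ℝ → ℝ} {μ' k : ℝ} (hμ : HasDerivAt μ μ' k) (t : ℝ) :
    HasDerivAt (fun k => Real.exp (-(t * μ k))) (-(t * μ') * Real.exp (-(t * μ k))) k :=
  ((hμ.const_mul t).neg.exp).congr_deriv (by simp only [Pi.neg_apply]; ring)

lemma summable_abs_pow_mul_exp_neg_abs {δ : ℝ} (hδ : 0 < δ) (n : ℕ) :
    Summable fun x : ℤ => |(x : ℝ)| ^ n * Real.exp (-δ * |(x : ℝ)|) := by
  have hr : ‖Real.exp (-δ)‖ < 1 := by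
    rw [Real.norm_eq_abs, abs_of_pos (Real.exp_pos _)]
    exact Real.exp_lt_one_iff.mpr (by linarith)
  have hgeom := summable_pow_mul_geometric_of_norm_lt_one (R := ℝ) n hr
  have hnat : ∀ m : ℕ, |((m : ℤ) : ℝ)| ^ n * Real.exp (-δ * |((m : ℤ) : ℝ)|)
      = (m : ℝ) ^ n * Real.exp (-δ) ^ m := by
    intro m
    rw [Int.cast_natCast, abs_of_nonneg (Nat.cast_nonneg m), ← Real.exp_nat_mul]
    ring_nf
  refine Summable.of_nat_of_neg (hgeom.congr fun m => (hnat m).symm) ?_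
  refine hgeom.congr fun m => ?_
  rw [← hnat m, Int.cast_neg, abs_neg]

lemma summable_abs_pow_mul_of_abs_le_exp {Φ : ℤ → ℝ} {C δ : ℝ} (hδ : 0 < δ)
    (hΦ : ∀ x : ℤ, |Φ x| ≤ C * Real.exp (-δ * |(x : ℝ)|)) (n : ℕ) :
    Summable fun x : ℤ => |(x : ℝ)| ^ n * |Φ x| := by
  refine ((summable_abs_pow_mul_exp_neg_abs hδ n).mul_left C).of_nonneg_of_le
    (fun x => by positivity) fun x => ?_
  calc |(x : ℝ)| ^ n * |Φ x| ≤ |(x : ℝ)| ^ n * (C * Real.exp (-δ * |(x : ℝ)|)) :=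
        mul_le_mul_of_nonneg_left (hΦ x) (by positivity)
    _ = C * (|(x : ℝ)| ^ n * Real.exp (-δ * |(x : ℝ)|)) := by ring

def phiHatDeriv (Φ : ℤ → ℝ) (k : ℝ) : ℝ :=
  ∑' x : ℤ, -(2 * π * x * Φ x * Real.sin (2 * π * k * x))

section FourierSymbol

variable {Φ : ℤ → ℝ}

lemma abs_phiHat_le (hΦ : Summable fun x => |Φ x|) (k : ℝ) : |phiHat Φ k| ≤ ∑' x, |Φ x| := by
  have hterm : ∀ x : ℤ, ‖Φ x * Real.cos (2 * π * k * x)‖ ≤ |Φ x| := fun x => by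
    rw [Real.norm_eq_abs, abs_mul]
    exact mul_le_of_le_one_right (abs_nonneg _) (Real.abs_cos_le_one _)
  exact (norm_tsum_le_tsum_norm (hΦ.of_nonneg_of_le (fun _ => norm_nonneg _) hterm)).trans
    (Summable.tsum_le_tsum hterm (hΦ.of_nonneg_of_le (fun _ => norm_nonneg _) hterm) hΦ)

lemma norm_phiHatDeriv_term_le (x : ℤ) (k : ℝ) :
    ‖-(2 * π * x * Φ x * Real.sin (2 * π * k * x))‖ ≤ 2 * π * (|(x : ℝ)| * |Φ x|) := by
  rw [norm_neg, Real.norm_eq_abs, abs_mul, abs_mul, abs_mul, abs_mul, abs_two,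
    abs_of_pos Real.pi_pos]
  have := Real.abs_sin_le_one (2 * π * k * x)
  have : 0 ≤ 2 * π * |(x : ℝ)| * |Φ x| := by positivity
  nlinarith

lemma hasDerivAt_phiHat (hΦ₀ : Summable fun x => |Φ x|)
    (hΦ₁ : Summable fun x : ℤ => |(x : ℝ)| * |Φ x|) (k : ℝ) :
    HasDerivAt (phiHat Φ) (phiHatDeriv Φ k) k := by
  refine hasDerivAt_tsum (hΦ₁.mul_left (2 * π)) (fun x k => ?_) norm_phiHatDeriv_term_le
    (y₀ := 0) (by simpa using hΦ₀.of_abs) k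
  have hlin : HasDerivAt (fun k : ℝ => 2 * π * k * x) (2 * π * x) k := by
    simpa using ((hasDerivAt_id k).const_mul (2 * π)).mul_const (x : ℝ)
  exact (hlin.cos.const_mul (Φ x)).congr_deriv (by ring)

lemma continuous_phiHatDeriv (hΦ₁ : Summable fun x : ℤ => |(x : ℝ)| * |Φ x|) :
    Continuous (phiHatDeriv Φ) :=
  continuous_tsum (fun x => by fun_prop) (hΦ₁.mul_left (2 * π)) fun x k =>
    norm_phiHatDeriv_term_le x k

lemma abs_phiHatDeriv_le (hΦ₁ : Summable fun x : ℤ => |(x : ℝ)| * |Φ x|) (k : ℝ) :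
    |phiHatDeriv Φ k| ≤ 2 * π * ∑' x : ℤ, |(x : ℝ)| * |Φ x| := by
  have hsum := (hΦ₁.mul_left (2 * π)).of_nonneg_of_le (fun _ => norm_nonneg _)
    fun x => norm_phiHatDeriv_term_le (Φ := Φ) x k
  rw [← tsum_mul_left]
  exact (norm_tsum_le_tsum_norm hsum).trans
    (Summable.tsum_le_tsum (fun x => norm_phiHatDeriv_term_le x k) hsum (hΦ₁.mul_left _))

lemma contDiff_phiHat (hΦ₀ : Summable fun x => |Φ x|)
    (hΦ₁ : Summable fun x : ℤ => |(x : ℝ)| * |Φ x|) : ContDiff ℝ 1 (phiHat Φ) := by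
  rw [contDiff_one_iff_deriv]
  refine ⟨fun k => (hasDerivAt_phiHat hΦ₀ hΦ₁ k).differentiableAt, ?_⟩
  rw [funext fun k => (hasDerivAt_phiHat hΦ₀ hΦ₁ k).deriv]
  exact continuous_phiHatDeriv hΦ₁

lemma phiHat_le_supPhiHat (hΦ : Summable fun x => |Φ x|) (k : ℝ) :
    phiHat Φ k ≤ supPhiHat Φ :=
  le_ciSup ⟨_, by rintro _ ⟨k', rfl⟩; exact (le_abs_self _).trans (abs_phiHat_le hΦ k')⟩ k

end FourierSymbol

section Kernel

variable {Φ : ℤ → ℝ} {γ t k m : ℝ}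

lemma muM_le_muP : muM Φ γ k ≤ muP Φ γ k := by
  have := Real.sqrt_nonneg ((γ / 2) ^ 2 - phiHat Φ k)
  unfold muP muM uFun; linarith

lemma muM_nonneg (huγ : 2 * uFun Φ γ k ≤ γ) : 0 ≤ muM Φ γ k := by
  unfold muM; linarith

lemma muP_le (huγ : 2 * uFun Φ γ k ≤ γ) : muP Φ γ k ≤ γ := by
  unfold muP; linarith

lemma two_mul_uFun_le (hγ : 0 ≤ γ) (hp : 0 ≤ phiHat Φ k) : 2 * uFun Φ γ k ≤ γ := by
  have : uFun Φ γ k ≤ γ / 2 := by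
    rw [uFun, Real.sqrt_le_left (by linarith)]
    linarith
  linarith

lemma sqrt_le_uFun {P : ℝ} (hP : phiHat Φ k ≤ P) :
    Real.sqrt ((γ / 2) ^ 2 - P) ≤ uFun Φ γ k :=
  Real.sqrt_le_sqrt (by linarith)

lemma muM_mul_muP (hp : phiHat Φ k ≤ (γ / 2) ^ 2) :
    muM Φ γ k * muP Φ γ k = phiHat Φ k := by
  have := Real.sq_sqrt (sub_nonneg.mpr hp)
  unfold muM muP uFun
  linear_combination -this

lemma muP_pos (hγ : 0 < γ) : 0 < muP Φ γ k := by
  have := Real.sqrt_nonneg ((γ / 2) ^ 2 - phiHat Φ k)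
  unfold muP uFun; linarith

lemma div_le_muM {ω₀ : ℝ} (hγ : 0 < γ) (hω : ω₀ ^ 2 ≤ phiHat Φ k)
    (hp : phiHat Φ k ≤ (γ / 2) ^ 2) : ω₀ ^ 2 / γ ≤ muM Φ γ k := by
  have h0 : 0 ≤ phiHat Φ k := (sq_nonneg ω₀).trans hω
  calc ω₀ ^ 2 / γ ≤ phiHat Φ k / γ := by gcongr
    _ ≤ phiHat Φ k / muP Φ γ k :=
        div_le_div_of_nonneg_left h0 (muP_pos hγ) (muP_le (two_mul_uFun_le hγ.le h0))
    _ = muM Φ γ k := by rw [← muM_mul_muP hp, mul_div_cancel_right₀ _ (muP_pos hγ).ne']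

lemma exp_neg_mul_muM_le {ω₀ : ℝ} (hγ : 0 < γ) (ht : 0 ≤ t) (hω : ω₀ ^ 2 ≤ phiHat Φ k)
    (hp : phiHat Φ k ≤ (γ / 2) ^ 2) :
    Real.exp (-(t * muM Φ γ k)) ≤ Real.exp (-(ω₀ ^ 2 / γ) * t) :=
  Real.exp_le_exp.mpr (by nlinarith [div_le_muM hγ hω hp])

lemma hasDerivAt_Ahat1_time :
    HasDerivAt (fun s => Ahat1 Φ γ s k) (-(phiHat Φ k * Ahat2 Φ γ t k)) t := by
  have := (((hasDerivAt_exp_neg_mul (muP Φ γ k) t).sub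
    (hasDerivAt_exp_neg_mul (muM Φ γ k) t)).const_mul (phiHat Φ k)).div_const (2 * uFun Φ γ k)
  exact this.congr_deriv (by unfold Ahat2; ring)

lemma hasDerivAt_Ahat2_time :
    HasDerivAt (fun s => Ahat2 Φ γ s k)
      (-((muP Φ γ k ^ 2 * Real.exp (-(t * muP Φ γ k)) -
        muM Φ γ k ^ 2 * Real.exp (-(t * muM Φ γ k))) / (2 * uFun Φ γ k))) t := by
  have := (((hasDerivAt_exp_neg_mul (muP Φ γ k) t).const_mul (muP Φ γ k)).sub
    ((hasDerivAt_exp_neg_mul (muM Φ γ k) t).const_mul (muM Φ γ k))).div_const (2 * uFun Φ γ k)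
  exact this.congr_deriv (by ring)

lemma exp_neg_mul_muP_le (ht : 0 ≤ t) :
    Real.exp (-(t * muP Φ γ k)) ≤ Real.exp (-(t * muM Φ γ k)) :=
  Real.exp_le_exp.mpr (neg_le_neg (mul_le_mul_of_nonneg_left muM_le_muP ht))

lemma abs_exp_neg_mul_muP_sub_le (ht : 0 ≤ t) :
    |Real.exp (-(t * muP Φ γ k)) - Real.exp (-(t * muM Φ γ k))| ≤
      Real.exp (-(t * muM Φ γ k)) := by
  simpa using abs_mul_exp_sub_mul_exp_le ht muM_le_muP zero_le_one le_rfl zero_le_one le_rfl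

lemma abs_muP_mul_exp_sub_le (ht : 0 ≤ t) (huγ : 2 * uFun Φ γ k ≤ γ) :
    |muP Φ γ k * Real.exp (-(t * muP Φ γ k)) - muM Φ γ k * Real.exp (-(t * muM Φ γ k))| ≤
      γ * Real.exp (-(t * muM Φ γ k)) :=
  abs_mul_exp_sub_mul_exp_le ht muM_le_muP ((muM_nonneg huγ).trans muM_le_muP) (muP_le huγ)
    (muM_nonneg huγ) (muM_le_muP.trans (muP_le huγ))

lemma abs_div_two_mul_uFun_le {N C : ℝ} (hm : 0 < m) (hmu : m ≤ 2 * uFun Φ γ k)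
    (hN : |N| ≤ C * Real.exp (-(t * muM Φ γ k))) :
    |N / (2 * uFun Φ γ k)| ≤ C / m * Real.exp (-(t * muM Φ γ k)) := by
  rw [abs_div, abs_of_pos (hm.trans_le hmu), div_mul_eq_mul_div]
  exact div_le_div₀ ((abs_nonneg _).trans hN) hN hm hmu

lemma abs_Ahat1_le (ht : 0 ≤ t) (hm : 0 < m) (hmu : m ≤ 2 * uFun Φ γ k) :
    |Ahat1 Φ γ t k| ≤ |phiHat Φ k| / m * Real.exp (-(t * muM Φ γ k)) := by
  refine abs_div_two_mul_uFun_le hm hmu ?_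
  rw [abs_mul]
  gcongr
  exact abs_exp_neg_mul_muP_sub_le ht

lemma abs_Ahat2_le (ht : 0 ≤ t) (hm : 0 < m) (hmu : m ≤ 2 * uFun Φ γ k)
    (huγ : 2 * uFun Φ γ k ≤ γ) :
    |Ahat2 Φ γ t k| ≤ γ / m * Real.exp (-(t * muM Φ γ k)) :=
  abs_div_two_mul_uFun_le hm hmu (abs_muP_mul_exp_sub_le ht huγ)

lemma abs_deriv_time_Ahat1_le (ht : 0 ≤ t) (hm : 0 < m) (hmu : m ≤ 2 * uFun Φ γ k)
    (huγ : 2 * uFun Φ γ k ≤ γ) :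
    |deriv (fun s => Ahat1 Φ γ s k) t| ≤
      |phiHat Φ k| * (γ / m) * Real.exp (-(t * muM Φ γ k)) := by
  rw [hasDerivAt_Ahat1_time.deriv, abs_neg, abs_mul, mul_assoc]
  gcongr
  exact abs_Ahat2_le ht hm hmu huγ

lemma abs_deriv_time_Ahat2_le (ht : 0 ≤ t) (hm : 0 < m) (hmu : m ≤ 2 * uFun Φ γ k)
    (huγ : 2 * uFun Φ γ k ≤ γ) :
    |deriv (fun s => Ahat2 Φ γ s k) t| ≤ γ ^ 2 / m * Real.exp (-(t * muM Φ γ k)) := by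
  have hM := muM_nonneg huγ
  have hP := muP_le huγ
  rw [hasDerivAt_Ahat2_time.deriv, abs_neg]
  exact abs_div_two_mul_uFun_le hm hmu (abs_mul_exp_sub_mul_exp_le ht muM_le_muP
    (sq_nonneg _) (pow_le_pow_left₀ (hM.trans muM_le_muP) hP 2) (sq_nonneg _)
    (pow_le_pow_left₀ hM (muM_le_muP.trans hP) 2))

end Kernel

section Frequency

variable {Φ : ℤ → ℝ} {γ t k m u' : ℝ}

lemma hasDerivAt_uFun {p' : ℝ} (hp : HasDerivAt (phiHat Φ) p' k) (hu : 0 < uFun Φ γ k) :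
    HasDerivAt (uFun Φ γ) (-p' / (2 * uFun Φ γ k)) k :=
  (hp.const_sub _).sqrt (Real.sqrt_pos.mp hu).ne'

lemma abs_deriv_freq_Ahat1_le {p' : ℝ} (ht : 0 ≤ t) (hm : 0 < m)
    (hmu : m ≤ 2 * uFun Φ γ k) (hp : HasDerivAt (phiHat Φ) p' k)
    (hu : HasDerivAt (uFun Φ γ) u' k) :
    |deriv (fun k' => Ahat1 Φ γ t k') k| ≤
      ((|p'| + 2 * |phiHat Φ k| * |u'|) / m + |phiHat Φ k| * (2 * |u'|) / m ^ 2) *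
        ((1 + t) * Real.exp (-(t * muM Φ γ k))) := by
  have hμP : HasDerivAt (muP Φ γ) u' k := hu.const_add _
  have hμM : HasDerivAt (muM Φ γ) (-u') k := hu.const_sub _
  have hP := hasDerivAt_exp_neg_const_mul hμP t
  have hM := hasDerivAt_exp_neg_const_mul hμM t
  set eP := Real.exp (-(t * muP Φ γ k))
  set eM := Real.exp (-(t * muM Φ γ k))
  have heP : 0 ≤ eP := (Real.exp_pos _).le
  have heM : 0 ≤ eM := (Real.exp_pos _).le
  have hPM : eP ≤ eM := exp_neg_mul_muP_le ht
  have hdiff : |eP - eM| ≤ eM := abs_exp_neg_mul_muP_sub_le ht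
  have hN : |phiHat Φ k * (eP - eM)| ≤ |phiHat Φ k| * ((1 + t) * eM) := by
    rw [abs_mul]
    gcongr
    nlinarith [mul_nonneg ht heM]
  have hN' : |p' * (eP - eM) + phiHat Φ k * (-(t * u') * eP - -(t * -u') * eM)| ≤
      (|p'| + 2 * |phiHat Φ k| * |u'|) * ((1 + t) * eM) := by
    have hsplit : p' * (eP - eM) + phiHat Φ k * (-(t * u') * eP - -(t * -u') * eM) =
        p' * (eP - eM) - t * (u' * phiHat Φ k) * (eP + eM) := by ring
    have hsum : |eP + eM| ≤ 2 * eM := by rw [abs_of_nonneg (by linarith)]; linarith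
    calc _ ≤ |p'| * |eP - eM| + t * (|u'| * |phiHat Φ k|) * |eP + eM| := by
          rw [hsplit]
          refine (abs_sub _ _).trans_eq ?_
          rw [abs_mul, abs_mul, abs_mul, abs_mul, abs_of_nonneg ht]
      _ ≤ |p'| * eM + t * (|u'| * |phiHat Φ k|) * (2 * eM) := by gcongr
      _ ≤ _ := by
          nlinarith [mul_nonneg (abs_nonneg p') (mul_nonneg ht heM),
            mul_nonneg (mul_nonneg (abs_nonneg u') (abs_nonneg (phiHat Φ k))) heM]
  refine abs_deriv_div_le (hp.mul (hP.sub hM)) (hu.const_mul 2) hm hmu hN hN' ?_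
  rw [abs_mul, abs_two]

lemma abs_deriv_freq_Ahat2_le (ht : 0 ≤ t) (hm : 0 < m) (hmu : m ≤ 2 * uFun Φ γ k)
    (huγ : 2 * uFun Φ γ k ≤ γ) (hu : HasDerivAt (uFun Φ γ) u' k) :
    |deriv (fun k' => Ahat2 Φ γ t k') k| ≤
      (2 * |u'| * (1 + γ) / m + γ * (2 * |u'|) / m ^ 2) *
        ((1 + t) * Real.exp (-(t * muM Φ γ k))) := by
  have hμP : HasDerivAt (muP Φ γ) u' k := hu.const_add _
  have hμM : HasDerivAt (muM Φ γ) (-u') k := hu.const_sub _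
  have hP := hasDerivAt_exp_neg_const_mul hμP t
  have hM := hasDerivAt_exp_neg_const_mul hμM t
  have hμM0 := muM_nonneg huγ
  have hμPγ := muP_le huγ
  have hμMP : muM Φ γ k ≤ muP Φ γ k := muM_le_muP
  set eP := Real.exp (-(t * muP Φ γ k))
  set eM := Real.exp (-(t * muM Φ γ k))
  have heP : 0 ≤ eP := (Real.exp_pos _).le
  have heM : 0 ≤ eM := (Real.exp_pos _).le
  have hPM : eP ≤ eM := exp_neg_mul_muP_le ht
  have hN : |muP Φ γ k * eP - muM Φ γ k * eM| ≤ γ * ((1 + t) * eM) := by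
    have := abs_muP_mul_exp_sub_le ht huγ
    nlinarith [mul_nonneg (hμM0.trans (hμMP.trans hμPγ)) (mul_nonneg ht heM)]
  have hN' : |(u' * eP + muP Φ γ k * (-(t * u') * eP)) -
      (-u' * eM + muM Φ γ k * (-(t * -u') * eM))| ≤
      2 * |u'| * (1 + γ) * ((1 + t) * eM) := by
    have hsplit : (u' * eP + muP Φ γ k * (-(t * u') * eP)) -
        (-u' * eM + muM Φ γ k * (-(t * -u') * eM)) =
        u' * (eP + eM) - t * u' * (muP Φ γ k * eP + muM Φ γ k * eM) := by ring
    have hsum : |eP + eM| ≤ 2 * eM := by rw [abs_of_nonneg (by linarith)]; linarith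
    have hwsum : |muP Φ γ k * eP + muM Φ γ k * eM| ≤ 2 * γ * eM := by
      rw [abs_of_nonneg (add_nonneg (mul_nonneg (hμM0.trans hμMP) heP) (mul_nonneg hμM0 heM))]
      nlinarith [mul_le_mul hμPγ hPM heP (hμM0.trans (hμMP.trans hμPγ))]
    calc _ ≤ |u'| * |eP + eM| + t * |u'| * |muP Φ γ k * eP + muM Φ γ k * eM| := by
          rw [hsplit]
          refine (abs_sub _ _).trans_eq ?_
          rw [abs_mul, abs_mul, abs_mul, abs_of_nonneg ht]
      _ ≤ |u'| * (2 * eM) + t * |u'| * (2 * γ * eM) := by gcongr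
      _ ≤ _ := by
          nlinarith [mul_nonneg (abs_nonneg u') heM, mul_nonneg (mul_nonneg (abs_nonneg u')
            (hμM0.trans (hμMP.trans hμPγ))) heM, mul_nonneg (abs_nonneg u') (mul_nonneg ht heM)]
  refine abs_deriv_div_le ((hμP.mul hP).sub (hμM.mul hM)) (hu.const_mul 2) hm hmu hN hN' ?_
  rw [abs_mul, abs_two]

end Frequency

section Regularity

variable {Φ : ℤ → ℝ} {γ : ℝ} {n : WithTop ℕ∞}

lemma contDiff_uFun (hp : ContDiff ℝ n (phiHat Φ)) (hlt : ∀ k, phiHat Φ k < (γ / 2) ^ 2) :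
    ContDiff ℝ n (uFun Φ γ) :=
  (contDiff_const.sub hp).sqrt fun k => (sub_pos.mpr (hlt k)).ne'

lemma contDiff_Ahat1 (hp : ContDiff ℝ n (phiHat Φ)) (hlt : ∀ k, phiHat Φ k < (γ / 2) ^ 2) :
    ContDiff ℝ n (fun q : ℝ × ℝ => Ahat1 Φ γ q.1 q.2) := by
  have hu : ContDiff ℝ n fun q : ℝ × ℝ => uFun Φ γ q.2 :=
    (contDiff_uFun hp hlt).comp contDiff_snd
  have hμP : ContDiff ℝ n fun q : ℝ × ℝ => muP Φ γ q.2 := contDiff_const.add hu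
  have hμM : ContDiff ℝ n fun q : ℝ × ℝ => muM Φ γ q.2 := contDiff_const.sub hu
  refine ((hp.comp contDiff_snd).mul ((contDiff_fst.mul hμP).neg.exp.sub
    (contDiff_fst.mul hμM).neg.exp)).div (contDiff_const.mul hu) fun q => ?_
  exact mul_ne_zero two_ne_zero (Real.sqrt_pos.mpr (sub_pos.mpr (hlt q.2))).ne'

lemma contDiff_Ahat2 (hp : ContDiff ℝ n (phiHat Φ)) (hlt : ∀ k, phiHat Φ k < (γ / 2) ^ 2) :
    ContDiff ℝ n (fun q : ℝ × ℝ => Ahat2 Φ γ q.1 q.2) := by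
  have hu : ContDiff ℝ n fun q : ℝ × ℝ => uFun Φ γ q.2 :=
    (contDiff_uFun hp hlt).comp contDiff_snd
  have hμP : ContDiff ℝ n fun q : ℝ × ℝ => muP Φ γ q.2 := contDiff_const.add hu
  have hμM : ContDiff ℝ n fun q : ℝ × ℝ => muM Φ γ q.2 := contDiff_const.sub hu
  refine ((hμP.mul (contDiff_fst.mul hμP).neg.exp).sub
    (hμM.mul (contDiff_fst.mul hμM).neg.exp)).div (contDiff_const.mul hu) fun q => ?_
  exact mul_ne_zero two_ne_zero (Real.sqrt_pos.mpr (sub_pos.mpr (hlt q.2))).ne'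

end Regularity

theorem exists_bounds_Ahat {Φ : ℤ → ℝ} {γ S M m : ℝ} {p' : ℝ → ℝ}
    (hp : ∀ k, HasDerivAt (phiHat Φ) (p' k) k) (hS : ∀ k, |phiHat Φ k| ≤ S)
    (hM : ∀ k, |p' k| ≤ M) (hm : 0 < m) (hmu : ∀ k, m ≤ 2 * uFun Φ γ k)
    (huγ : ∀ k, 2 * uFun Φ γ k ≤ γ) :
    ∃ K > 0, ∀ t ≥ (0 : ℝ), ∀ k : ℝ,
      (|Ahat1 Φ γ t k| ≤ K * Real.exp (-(t * muM Φ γ k)) ∧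
        |Ahat2 Φ γ t k| ≤ K * Real.exp (-(t * muM Φ γ k))) ∧
      (|deriv (fun s => Ahat1 Φ γ s k) t| ≤ K * Real.exp (-(t * muM Φ γ k)) ∧
        |deriv (fun s => Ahat2 Φ γ s k) t| ≤ K * Real.exp (-(t * muM Φ γ k))) ∧
      (|deriv (fun k' => Ahat1 Φ γ t k') k| ≤ K * ((1 + t) * Real.exp (-(t * muM Φ γ k))) ∧
        |deriv (fun k' => Ahat2 Φ γ t k') k| ≤
          K * ((1 + t) * Real.exp (-(t * muM Φ γ k)))) := by
  have hS0 : 0 ≤ S := (abs_nonneg _).trans (hS 0)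
  have hM0 : 0 ≤ M := (abs_nonneg _).trans (hM 0)
  have hγ : 0 ≤ γ := hm.le.trans ((hmu 0).trans (huγ 0))
  have hu : ∀ k, HasDerivAt (uFun Φ γ) (-p' k / (2 * uFun Φ γ k)) k := fun k =>
    hasDerivAt_uFun (hp k) (by linarith [hmu k])
  have hU : ∀ k, |-p' k / (2 * uFun Φ γ k)| ≤ M / m := fun k => by
    rw [abs_div, abs_neg, abs_of_pos (hm.trans_le (hmu k))]
    exact div_le_div₀ hM0 (hM k) hm (hmu k)
  set U := M / m
  set c₁ := S / m
  set c₂ := γ / m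
  set c₃ := S * (γ / m)
  set c₄ := γ ^ 2 / m
  set c₅ := (M + 2 * S * U) / m + S * (2 * U) / m ^ 2
  set c₆ := 2 * U * (1 + γ) / m + γ * (2 * U) / m ^ 2
  have hc : 0 ≤ c₁ ∧ 0 ≤ c₂ ∧ 0 ≤ c₃ ∧ 0 ≤ c₄ ∧ 0 ≤ c₅ ∧ 0 ≤ c₆ := by
    refine ⟨?_, ?_, ?_, ?_, ?_, ?_⟩ <;> positivity
  refine ⟨1 + c₁ + c₂ + c₃ + c₄ + c₅ + c₆, by linarith, fun t ht k => ?_⟩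
  have hX : 0 ≤ Real.exp (-(t * muM Φ γ k)) := (Real.exp_pos _).le
  have hX' : 0 ≤ (1 + t) * Real.exp (-(t * muM Φ γ k)) := by positivity
  have hSk := hS k
  have hMk := hM k
  have hUk := hU k
  have widen : ∀ {q c c' X : ℝ}, 0 ≤ X → |q| ≤ c * X → c ≤ c' →
      c' ≤ 1 + c₁ + c₂ + c₃ + c₄ + c₅ + c₆ → |q| ≤ (1 + c₁ + c₂ + c₃ + c₄ + c₅ + c₆) * X :=
    fun hX h hc hc' => h.trans (mul_le_mul_of_nonneg_right (hc.trans hc') hX)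
  refine ⟨⟨widen (c' := c₁) hX (abs_Ahat1_le ht hm (hmu k)) (by simp only [c₁]; gcongr)
      (by linarith),
    widen (c' := c₂) hX (abs_Ahat2_le ht hm (hmu k) (huγ k)) le_rfl (by linarith)⟩,
    ⟨widen (c' := c₃) hX (abs_deriv_time_Ahat1_le ht hm (hmu k) (huγ k))
      (by simp only [c₃]; gcongr) (by linarith),
    widen (c' := c₄) hX (abs_deriv_time_Ahat2_le ht hm (hmu k) (huγ k)) le_rfl (by linarith)⟩,
    ⟨widen (c' := c₅) hX' (abs_deriv_freq_Ahat1_le ht hm (hmu k) (hp k) (hu k))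
      (by simp only [c₅]; gcongr) (by linarith),
    widen (c' := c₆) hX' (abs_deriv_freq_Ahat2_le ht hm (hmu k) (huγ k) (hu k))
      (by simp only [c₆]; gcongr) (by linarith)⟩⟩

/-- regularity and exponential bounds for `Â¹` and `Â²` (Lemma 4.4, items 1–2). -/
theorem stmt3 (Φ : ℤ → ℝ) (ω₀ γ : ℝ) (hA1 : AssumptionA1 Φ ω₀) (hγ : 0 < γ)
    (hdom : 4 * supPhiHat Φ < γ ^ 2) :
    ContDiffOn ℝ 1 (fun q : ℝ × ℝ => Ahat1 Φ γ q.1 q.2) (Set.Ici 0 ×ˢ Set.univ) ∧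
    ContDiffOn ℝ 1 (fun q : ℝ × ℝ => Ahat2 Φ γ q.1 q.2) (Set.Ici 0 ×ˢ Set.univ) ∧
    ∃ c₀ > (0:ℝ), ∀ t ≥ (0:ℝ), ∀ k : ℝ,
      (|Ahat1 Φ γ t k| ≤ c₀ * Real.exp (-(ω₀ ^ 2 / γ) * t) ∧
        |Ahat2 Φ γ t k| ≤ c₀ * Real.exp (-(ω₀ ^ 2 / γ) * t)) ∧
      (|deriv (fun s => Ahat1 Φ γ s k) t| ≤ c₀ * Real.exp (-(ω₀ ^ 2 / γ) * t) ∧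
        |deriv (fun s => Ahat2 Φ γ s k) t| ≤ c₀ * Real.exp (-(ω₀ ^ 2 / γ) * t)) ∧
      (|deriv (fun k' => Ahat1 Φ γ t k') k| ≤ c₀ * Real.exp (-(ω₀ ^ 2 / γ) * t / 2) ∧
        |deriv (fun k' => Ahat2 Φ γ t k') k| ≤ c₀ * Real.exp (-(ω₀ ^ 2 / γ) * t / 2)) := by
  obtain ⟨⟨_, -, δ, hδ, hdecay⟩, -, hω₀, hpin⟩ := hA1
  have hΦ₀ : Summable fun x => |Φ x| := by
    simpa using summable_abs_pow_mul_of_abs_le_exp hδ hdecay 0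
  have hΦ₁ : Summable fun x : ℤ => |(x : ℝ)| * |Φ x| := by
    simpa using summable_abs_pow_mul_of_abs_le_exp hδ hdecay 1
  have hsup : supPhiHat Φ < (γ / 2) ^ 2 := by linarith
  have hlt : ∀ k, phiHat Φ k < (γ / 2) ^ 2 := fun k => (phiHat_le_supPhiHat hΦ₀ k).trans_lt hsup
  have hcd := contDiff_phiHat hΦ₀ hΦ₁
  refine ⟨(contDiff_Ahat1 hcd hlt).contDiffOn, (contDiff_Ahat2 hcd hlt).contDiffOn, ?_⟩
  obtain ⟨K, hK, hbounds⟩ := exists_bounds_Ahat (hasDerivAt_phiHat hΦ₀ hΦ₁) (abs_phiHat_le hΦ₀)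
    (abs_phiHatDeriv_le hΦ₁) (by positivity : 0 < 2 * Real.sqrt ((γ / 2) ^ 2 - supPhiHat Φ))
    (fun k => by gcongr; exact sqrt_le_uFun (phiHat_le_supPhiHat hΦ₀ k))
    (fun k => two_mul_uFun_le hγ.le ((sq_nonneg ω₀).trans (hpin k)))
  set δ₀ := ω₀ ^ 2 / γ
  have hδ₀ : 0 < δ₀ := by positivity
  refine ⟨K * (1 + 2 / δ₀), by positivity, fun t ht k => ?_⟩
  have hrate := exp_neg_mul_muM_le hγ ht (hpin k) (hlt k).le
  have hfast : Real.exp (-(t * muM Φ γ k)) ≤ (1 + 2 / δ₀) * Real.exp (-δ₀ * t) :=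
    hrate.trans (le_mul_of_one_le_left (Real.exp_pos _).le (le_add_of_nonneg_right (by positivity)))
  have hslow : (1 + t) * Real.exp (-(t * muM Φ γ k)) ≤ (1 + 2 / δ₀) * Real.exp (-δ₀ * t / 2) :=
    (mul_le_mul_of_nonneg_left hrate (by linarith)).trans (one_add_mul_exp_neg_le hδ₀ ht)
  have lift : ∀ {q X Y : ℝ}, X ≤ (1 + 2 / δ₀) * Y → |q| ≤ K * X → |q| ≤ K * (1 + 2 / δ₀) * Y :=
    fun hXY hq => hq.trans (by rw [mul_assoc]; exact mul_le_mul_of_nonneg_left hXY hK.le)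
  obtain ⟨⟨h₁, h₂⟩, ⟨h₃, h₄⟩, ⟨h₅, h₆⟩⟩ := hbounds t ht k
  exact ⟨⟨lift hfast h₁, lift hfast h₂⟩, ⟨lift hfast h₃, lift hfast h₄⟩,
    ⟨lift hslow h₅, lift hslow h₆⟩⟩
end
end

section
/- Suppose Φ satisfies Assumption (A1) and γ² > 4 max_k Φ̂(k). Let ω_max := max_k ω(k), u₀ := √((γ/2)² − ω_max²) > 0, t₁ := (2u₀)^{−1} ln(2γ²/ω₀²), and c₁ := ω₀²/(2γ²). Then −Â²_t(k) ≥ c₁ e^{−γt/2} for all t ≥ t₁ and all k. -/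
open Real MeasureTheory Matrix
open scoped BigOperators

noncomputable section

/-! With `μ± = γ/2 ± u`, `u = √((γ/2)² − Φ̂(k))`, one has
`−Â²_t(k) = e^{−γt/2} e^{tu} (μ₋ − μ₊ e^{−2tu}) / (2u)`.
Since `μ₋ μ₊ = Φ̂(k) ≥ ω₀²` and `μ₊ ≤ γ`, we get `μ₋ ≥ ω₀²/γ = 2γc₁`. Since `u ≥ u₀`, the
choice of `t₁` gives `e^{−2tu} ≤ c₁` for `t ≥ t₁`, hence `μ₊ e^{−2tu} ≤ γc₁`, and the bracket
is at least `γc₁ ≥ 2u c₁`. Boundedness of `Φ̂` (needed for `Φ̂(k) ≤ max Φ̂`) comes from the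
exponential decay of `Φ`. -/

lemma summable_exp_neg_mul_abs_int {δ : ℝ} (hδ : 0 < δ) :
    Summable fun x : ℤ => Real.exp (-δ * |(x : ℝ)|) := by
  have h : Summable fun n : ℕ => Real.exp (-δ * n) := by
    simpa [mul_comm] using Real.summable_exp_nat_mul_iff.mpr (neg_lt_zero.mpr hδ)
  exact .of_nat_of_neg (by simpa using h) (by simpa using h)

lemma bddAbove_range_phiHat {Φ : ℤ → ℝ} {C δ : ℝ} (hδ : 0 < δ)
    (hdecay : ∀ x : ℤ, |Φ x| ≤ C * Real.exp (-δ * |(x : ℝ)|)) :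
    BddAbove (Set.range (phiHat Φ)) := by
  refine ⟨∑' x : ℤ, C * Real.exp (-δ * |(x : ℝ)|), ?_⟩
  rintro _ ⟨k, rfl⟩
  refine (le_abs_self _).trans ?_
  rw [← Real.norm_eq_abs, phiHat]
  refine tsum_of_norm_bounded ((summable_exp_neg_mul_abs_int hδ).mul_left C).hasSum fun x => ?_
  rw [Real.norm_eq_abs, abs_mul]
  exact (mul_le_of_le_one_right (abs_nonneg _) (Real.abs_cos_le_one _)).trans (hdecay x)

lemma mul_exp_le_neg_overdamped_kernel {γ u t c : ℝ} (hγ : 0 < γ) (hu : 0 < u) (ht : 0 ≤ t)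
    (hμ : 2 * γ * c ≤ γ / 2 - u) (hexp : Real.exp (-(2 * t * u)) ≤ c) :
    c * Real.exp (-(γ * t) / 2) ≤
      -(((γ / 2 + u) * Real.exp (-(t * (γ / 2 + u))) -
        (γ / 2 - u) * Real.exp (-(t * (γ / 2 - u)))) / (2 * u)) := by
  have hc : 0 < c := (Real.exp_pos _).trans_le hexp
  have hX : 1 ≤ Real.exp (t * u) := Real.one_le_exp (mul_nonneg ht hu.le)
  have hM : Real.exp (-(t * (γ / 2 - u))) = Real.exp (-(γ * t) / 2) * Real.exp (t * u) := by
    rw [← Real.exp_add]; ring_nf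
  have hP : Real.exp (-(t * (γ / 2 + u))) =
      Real.exp (-(γ * t) / 2) * Real.exp (t * u) * Real.exp (-(2 * t * u)) := by
    rw [← Real.exp_add, ← Real.exp_add]; ring_nf
  have hγu : γ / 2 + u ≤ γ := by nlinarith
  have hbracket : 2 * u * c ≤ (γ / 2 - u) - (γ / 2 + u) * Real.exp (-(2 * t * u)) := by
    nlinarith [mul_le_mul hγu hexp (Real.exp_pos _).le hγ.le]
  rw [hM, hP, ← neg_div, le_div_iff₀ (by positivity)]
  nlinarith [Real.exp_pos (-(γ * t) / 2), mul_le_mul_of_nonneg_right hX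
    ((by positivity : 0 ≤ 2 * u * c).trans hbracket)]

/-- the explicit lower bound `−Â²_t(k) ≥ c₁ e^{−γt/2}` for `t ≥ t₁`
(Lemma 4.4, item 3). -/
theorem stmt4 (Φ : ℤ → ℝ) (ω₀ γ : ℝ) (hA1 : AssumptionA1 Φ ω₀) (hγ : 0 < γ)
    (hdom : 4 * supPhiHat Φ < γ ^ 2) :
    ∀ t : ℝ,
      (2 * Real.sqrt ((γ / 2) ^ 2 - supPhiHat Φ))⁻¹ * Real.log (2 * γ ^ 2 / ω₀ ^ 2) ≤ t →
      ∀ k : ℝ, ω₀ ^ 2 / (2 * γ ^ 2) * Real.exp (-(γ * t) / 2) ≤ -Ahat2 Φ γ t k := by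
  intro t ht k
  obtain ⟨⟨C, -, δ, hδ, hdecay⟩, -, hω₀, hpin⟩ := hA1
  have hPS : phiHat Φ k ≤ supPhiHat Φ := le_ciSup (bddAbove_range_phiHat hδ hdecay) k
  have hωP := hpin k
  have hω : 0 < ω₀ ^ 2 := by positivity
  have hu₀ : 0 < Real.sqrt ((γ / 2) ^ 2 - supPhiHat Φ) := Real.sqrt_pos.2 (by linarith)
  have hu₀u : Real.sqrt ((γ / 2) ^ 2 - supPhiHat Φ) ≤ uFun Φ γ k :=
    Real.sqrt_le_sqrt (by linarith)
  have hu_sq : uFun Φ γ k ^ 2 = (γ / 2) ^ 2 - phiHat Φ k := Real.sq_sqrt (by linarith)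
  have hlog_nonneg : 0 ≤ Real.log (2 * γ ^ 2 / ω₀ ^ 2) :=
    Real.log_nonneg (by rw [le_div_iff₀ hω]; nlinarith)
  have ht₀ : 0 ≤ t := (mul_nonneg (by positivity) hlog_nonneg).trans ht
  have hlog : Real.log (2 * γ ^ 2 / ω₀ ^ 2) ≤ 2 * t * uFun Φ γ k := by
    rw [inv_mul_le_iff₀ (by positivity)] at ht
    nlinarith
  have hexp : Real.exp (-(2 * t * uFun Φ γ k)) ≤ ω₀ ^ 2 / (2 * γ ^ 2) := by
    rw [← Real.log_le_log_iff (Real.exp_pos _) (by positivity), Real.log_exp,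
      ← inv_div, Real.log_inv]
    linarith
  have hμ : 2 * γ * (ω₀ ^ 2 / (2 * γ ^ 2)) ≤ γ / 2 - uFun Φ γ k := by
    rw [show 2 * γ * (ω₀ ^ 2 / (2 * γ ^ 2)) = ω₀ ^ 2 / γ by field_simp, div_le_iff₀ hγ]
    nlinarith [Real.sqrt_nonneg ((γ / 2) ^ 2 - phiHat Φ k)]
  exact mul_exp_le_neg_overdamped_kernel hγ (hu₀.trans_le hu₀u) ht₀ hμ hexp
end
end

section
/- Let L ≥ 1 and let p: [0,∞) × Λ_L → ℝ satisfy, for some constants C₀, δ₀, γ₂ > 0: (i) t ↦ p_{t,x} is C¹ on [0,∞) for every x ∈ Λ_L; (ii) p_{t,x} ≥ 0 and |∂_t p_{t,x}| ≤ C₀ e^{−γ₂|x| − δ₀ t}, p_{t,x} ≤ C₀ e^{−γ₂|x| − δ₀ t} for all x, t; (iii) ∫₀^∞ dt Σ_{x∈Λ_L} p_{t,x} = 1 and ∫₀^{t₀} dt Σ_{x∈Λ_L} p_{t,x} < 1 for every t₀ ≥ 0. Then there exists a unique continuous function G: [0,∞) × Λ_L → ℝ satisfying the renewal equation G(t,x)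 = p_{t,x} + ∫₀^t ds Σ_{y∈Λ_L} G(t−s, x−y) p_{s,y} for all t ≥ 0 and x ∈ Λ_L; moreover this G is nonnegative, bounded, and continuously differentiable in t. -/
/-!
The solution is the Neumann series `G = Σₙ p^{⋆(n+1)}` of iterated space-time convolutions. With
`g = Σₓ p` and `F(t) = ∫₀ᵗ g < 1` increasing, the `n`-th term is at most `A F(T)ⁿ` on `[0, T]`,
so the series converges locally uniformly and solves the equation; the same contraction by
`F(t) < 1`, applied to `Σₓ |G - G'|` at its maximum on `[0, T]`, gives uniqueness.

Summing over the lattice, `v(t) = Σₓ G(t, x)` solves the scalar renewal equation `v = g + v ⋆ g`.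
Its primitive `V` satisfies `V = F + g ⋆ V`, and as `F ≤ 1` this forces
`(V(t) - V(t - 1)) ∫₁ᵇ g ≤ 1`; since `∫ g = 1 > F(1)` some `∫₁ᵇ g` is positive, so `v` has
uniformly bounded mass on unit windows, and the exponential decay of `g` turns `v ≤ g + g ⋆ v`
into a geometric series of window masses. Finally `G ⋆ p` is the primitive of a continuous
function once `p(t - s)` is written as `p(0) + ∫₀^{t-s} ∂ₜp`, so `G = p + G ⋆ p` is `C¹`.
-/

open Real MeasureTheory
open scoped BigOperators

noncomputable section

def RenewalHyp (L : ℕ) [NeZero L] (p : ℝ → ZMod L → ℝ) (C₀ δ₀ γ₂ : ℝ) : Prop :=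
  (∀ x : ZMod L, ContDiffOn ℝ 1 (fun t => p t x) (Set.Ici 0)) ∧
  (∀ t ≥ (0:ℝ), ∀ x : ZMod L,
    0 ≤ p t x ∧
    |derivWithin (fun s => p s x) (Set.Ici 0) t| ≤
      C₀ * Real.exp (-γ₂ * |(zrep L x : ℝ)| - δ₀ * t) ∧
    p t x ≤ C₀ * Real.exp (-γ₂ * |(zrep L x : ℝ)| - δ₀ * t)) ∧
  (∫ t in Set.Ioi (0:ℝ), ∑ x : ZMod L, p t x) = 1 ∧
  (∀ t₀ ≥ (0:ℝ), (∫ t in (0:ℝ)..t₀, ∑ x : ZMod L, p t x) < 1)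

/-- `G` is a continuous solution of the renewal equation
`G(t,x) = p_{t,x} + ∫₀^t ds Σ_y G(t−s,x−y) p_{s,y}` (extended by `0` for `t < 0`). -/
def IsGreen (L : ℕ) [NeZero L] (p : ℝ → ZMod L → ℝ) (G : ℝ → ZMod L → ℝ) : Prop :=
  (∀ x : ZMod L, ContinuousOn (fun t => G t x) (Set.Ici 0)) ∧
  (∀ t < (0:ℝ), ∀ x : ZMod L, G t x = 0) ∧
  ∀ t ≥ (0:ℝ), ∀ x : ZMod L, G t x = p t x +
    ∫ s in (0:ℝ)..t, ∑ y : ZMod L, G (t - s) (x - y) * p s y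

open intervalIntegral Set

theorem integral_comp_sub_left_self (f : ℝ → ℝ) (t : ℝ) :
    ∫ s in (0:ℝ)..t, f (t - s) = ∫ s in (0:ℝ)..t, f s := by
  rw [integral_comp_sub_left, sub_self, sub_zero]

theorem integral_integral_triangle_swap {k : ℝ → ℝ → ℝ} (hk : Continuous (Function.uncurry k))
    {t : ℝ} (ht : 0 ≤ t) :
    ∫ r in (0:ℝ)..t, ∫ s in (0:ℝ)..r, k s (r - s) =
      ∫ s in (0:ℝ)..t, ∫ u in (0:ℝ)..(t - s), k s u := by
  set F : ℝ → ℝ → ℝ := fun r s =>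
    indicator {z : ℝ × ℝ | z.2 ≤ z.1} (fun z => k z.2 (z.1 - z.2)) (r, s)
  have hF : IntegrableOn (Function.uncurry F) (uIoc 0 t ×ˢ uIoc 0 t) := by
    have hcont : Continuous fun z : ℝ × ℝ => k z.2 (z.1 - z.2) :=
      hk.comp (continuous_snd.prodMk (continuous_fst.sub continuous_snd))
    refine IntegrableOn.indicator ?_ (isClosed_le continuous_snd continuous_fst).measurableSet
    exact (hcont.continuousOn.integrableOn_compact (isCompact_uIcc.prod isCompact_uIcc)).mono_set
      (prod_mono uIoc_subset_uIcc uIoc_subset_uIcc)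
  have hrow : ∀ r ∈ uIcc 0 t, ∫ s in (0:ℝ)..t, F r s = ∫ s in (0:ℝ)..r, k s (r - s) := by
    intro r hr
    rw [uIcc_of_le ht] at hr
    rw [← integral_indicator hr]
    rfl
  have hcol : ∀ s ∈ uIcc 0 t, ∫ r in (0:ℝ)..t, F r s = ∫ u in (0:ℝ)..(t - s), k s u := by
    intro s hs
    rw [uIcc_of_le ht] at hs
    -- `integral_indicator` only handles cuts `r ≤ c`, so reflect `r ↦ t - r` first
    have hrefl : ∫ r in (0:ℝ)..t, F r s =
        ∫ r in (0:ℝ)..t, indicator {r | r ≤ t - s} (fun r => k s (t - s - r)) r := by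
      rw [← integral_comp_sub_left_self (fun r => F r s)]
      refine integral_congr fun r _ => ?_
      simp only [F, indicator_apply, mem_ofPred_eq, le_sub_comm]
      congr 2; ring
    rw [hrefl, integral_indicator ⟨by linarith [hs.2], by linarith [hs.1]⟩,
      integral_comp_sub_left (fun u => k s u), sub_self, sub_zero]
  rw [← integral_congr hrow, ← integral_congr hcol, intervalIntegral_intervalIntegral_swap hF]

theorem nonpos_of_le_integral_comp_sub_mul {w g : ℝ → ℝ} (hw : Continuous w) (hg : Continuous g)
    (hg0 : ∀ s, 0 ≤ g s) (hmass : ∀ t, 0 ≤ t → ∫ s in (0:ℝ)..t, g s < 1)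
    (hle : ∀ t, 0 ≤ t → w t ≤ ∫ s in (0:ℝ)..t, w (t - s) * g s) {T : ℝ} (hT : 0 ≤ T) :
    w T ≤ 0 := by
  obtain ⟨t₀, ht₀, hmax⟩ := isCompact_Icc.exists_isMaxOn (nonempty_Icc.2 hT) hw.continuousOn
  have hself : w t₀ ≤ w t₀ * ∫ s in (0:ℝ)..t₀, g s := calc
    w t₀ ≤ ∫ s in (0:ℝ)..t₀, w (t₀ - s) * g s := hle t₀ ht₀.1
    _ ≤ ∫ s in (0:ℝ)..t₀, w t₀ * g s := by
      refine integral_mono_on ht₀.1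
        (((hw.comp (continuous_const.sub continuous_id)).mul hg).intervalIntegrable _ _)
        ((continuous_const.mul hg).intervalIntegrable _ _) fun s hs => ?_
      exact mul_le_mul_of_nonneg_right
        (hmax ⟨by linarith [hs.2], by linarith [hs.1, ht₀.2]⟩) (hg0 s)
    _ = w t₀ * ∫ s in (0:ℝ)..t₀, g s := intervalIntegral.integral_const_mul _ _
  have ht₀_nonpos : w t₀ ≤ 0 := by nlinarith [hmass t₀ ht₀.1]
  exact (hmax ⟨hT, le_rfl⟩).trans ht₀_nonpos

theorem integral_eq_add_of_renewal {g v : ℝ → ℝ} (hg : Continuous g) (hv : Continuous v)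
    (heq : ∀ t, 0 ≤ t → v t = g t + ∫ s in (0:ℝ)..t, v (t - s) * g s) {t : ℝ} (ht : 0 ≤ t) :
    ∫ r in (0:ℝ)..t, v r =
      (∫ r in (0:ℝ)..t, g r) + ∫ s in (0:ℝ)..t, g s * ∫ u in (0:ℝ)..(t - s), v u := by
  have hk : Continuous (Function.uncurry fun s u => g s * v u) := by fun_prop
  have hinner : Continuous fun r => ∫ s in (0:ℝ)..r, g s * v (r - s) :=
    continuous_parametric_intervalIntegral_of_continuous (by fun_prop) continuous_id
  calc ∫ r in (0:ℝ)..t, v r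
      = ∫ r in (0:ℝ)..t, (g r + ∫ s in (0:ℝ)..r, g s * v (r - s)) := by
        refine integral_congr fun r hr => ?_
        rw [uIcc_of_le ht] at hr
        simp_rw [heq r hr.1, mul_comm (v _)]
    _ = (∫ r in (0:ℝ)..t, g r) + ∫ r in (0:ℝ)..t, ∫ s in (0:ℝ)..r, g s * v (r - s) :=
        integral_add (hg.intervalIntegrable _ _) (hinner.intervalIntegrable _ _)
    _ = (∫ r in (0:ℝ)..t, g r) + ∫ s in (0:ℝ)..t, g s * ∫ u in (0:ℝ)..(t - s), v u := by
        rw [integral_integral_triangle_swap hk ht]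
        simp_rw [intervalIntegral.integral_const_mul]

theorem integral_mul_integral_le_one_of_renewal {g v : ℝ → ℝ} (hg : Continuous g)
    (hF : ∀ t, 0 ≤ t → ∫ s in (0:ℝ)..t, g s ≤ 1) (hv : Continuous v) (hv0 : ∀ s, 0 ≤ v s)
    (heq : ∀ t, 0 ≤ t → v t = g t + ∫ s in (0:ℝ)..t, v (t - s) * g s) {t : ℝ} (ht : 0 ≤ t) :
    ∫ s in (0:ℝ)..t, g s * ((∫ u in (0:ℝ)..t, v u) - ∫ u in (0:ℝ)..(t - s), v u) ≤ 1 := by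
  set V : ℝ → ℝ := fun t => ∫ u in (0:ℝ)..t, v u
  have hVc : Continuous V := continuous_primitive (fun _ _ => hv.intervalIntegrable _ _) 0
  have hV0 : 0 ≤ V t := integral_nonneg ht fun s _ => hv0 s
  have hVeq : V t = (∫ s in (0:ℝ)..t, g s) + ∫ s in (0:ℝ)..t, g s * V (t - s) :=
    integral_eq_add_of_renewal hg hv heq ht
  calc ∫ s in (0:ℝ)..t, g s * (V t - V (t - s))
      = ∫ s in (0:ℝ)..t, (g s * V t - g s * V (t - s)) := by simp_rw [mul_sub]
    _ = (∫ s in (0:ℝ)..t, g s * V t) - ∫ s in (0:ℝ)..t, g s * V (t - s) :=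
        integral_sub ((hg.mul continuous_const).intervalIntegrable _ _)
          ((hg.mul (hVc.comp (continuous_const.sub continuous_id))).intervalIntegrable _ _)
    _ = (∫ s in (0:ℝ)..t, g s) - V t * (1 - ∫ s in (0:ℝ)..t, g s) := by
        rw [intervalIntegral.integral_mul_const, hVeq]; ring
    _ ≤ 1 := by nlinarith [hF t ht]

theorem exists_window_bound_of_renewal {g v : ℝ → ℝ} {b : ℝ} (hg : Continuous g)
    (hg0 : ∀ s, 0 ≤ g s) (hF : ∀ t, 0 ≤ t → ∫ s in (0:ℝ)..t, g s ≤ 1) (hb : 1 ≤ b)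
    (hmass : 0 < ∫ s in (1:ℝ)..b, g s) (hv : Continuous v) (hv0 : ∀ s, 0 ≤ v s)
    (heq : ∀ t, 0 ≤ t → v t = g t + ∫ s in (0:ℝ)..t, v (t - s) * g s) :
    ∃ K, ∀ t, 0 ≤ t → ∫ s in max (t - 1) 0..t, v s ≤ K := by
  set V : ℝ → ℝ := fun t => ∫ s in (0:ℝ)..t, v s
  have hVc : Continuous V := continuous_primitive (fun _ _ => hv.intervalIntegrable _ _) 0
  have hVsub : ∀ a t, V t - V a = ∫ s in a..t, v s := fun a t =>
    integral_interval_sub_left (hv.intervalIntegrable _ _) (hv.intervalIntegrable _ _)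
  have hVmono : Monotone V := fun a t hat => by
    linarith [hVsub a t, integral_nonneg (μ := volume) hat fun s _ => hv0 s]
  have hint : ∀ t a c, IntervalIntegrable (fun s => g s * (V t - V (t - s))) volume a c :=
    fun t a c => (hg.mul (continuous_const.sub (hVc.comp (continuous_const.sub continuous_id))))
      |>.intervalIntegrable _ _
  have hlast : ∀ t, b ≤ t → (V t - V (t - 1)) * ∫ s in (1:ℝ)..b, g s ≤ 1 := fun t hbt => calc
    (V t - V (t - 1)) * ∫ s in (1:ℝ)..b, g s = ∫ s in (1:ℝ)..b, g s * (V t - V (t - 1)) := by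
        rw [intervalIntegral.integral_mul_const, mul_comm]
    _ ≤ ∫ s in (1:ℝ)..b, g s * (V t - V (t - s)) :=
        integral_mono_on hb ((hg.mul continuous_const).intervalIntegrable _ _) (hint t 1 b)
          fun s hs => mul_le_mul_of_nonneg_left
            (sub_le_sub_left (hVmono (by linarith [hs.1])) _) (hg0 s)
    _ ≤ ∫ s in (0:ℝ)..t, g s * (V t - V (t - s)) :=
        integral_mono_interval zero_le_one hb hbt
          ((ae_restrict_iff' measurableSet_Ioc).2 (ae_of_all _ fun s hs => mul_nonneg (hg0 s)
            (sub_nonneg.2 (hVmono (by linarith [hs.1]))))) (hint t 0 t)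
    _ ≤ 1 := integral_mul_integral_le_one_of_renewal hg hF hv hv0 heq (by linarith)
  refine ⟨max (V b) (1 / ∫ s in (1:ℝ)..b, g s), fun t ht => ?_⟩
  rw [← hVsub]
  rcases le_or_gt t b with htb | hbt
  · have : 0 ≤ V (max (t - 1) 0) := integral_nonneg (le_max_right _ _) fun s _ => hv0 s
    exact le_max_of_le_left (by linarith [hVmono htb])
  · rw [max_eq_left (by linarith)]
    exact le_max_of_le_right ((le_div_iff₀ hmass).2 (hlast t hbt.le))

theorem integral_exp_mul_le_of_window {h : ℝ → ℝ} {δ K : ℝ} (hδ : 0 < δ) (hh : Continuous h)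
    (hh0 : ∀ s, 0 ≤ h s) (hK : ∀ t, 0 ≤ t → ∫ s in max (t - 1) 0..t, h s ≤ K) {t : ℝ}
    (ht : 0 ≤ t) : ∫ s in (0:ℝ)..t, exp (-δ * (t - s)) * h s ≤ K / (1 - exp (-δ)) := by
  set E := exp (-δ)
  have hE1 : E < 1 := exp_lt_one_iff.2 (by linarith)
  have hK0 : 0 ≤ K := by simpa using hK 0 le_rfl
  have hint : ∀ t a c, IntervalIntegrable (fun s => exp (-δ * (t - s)) * h s) volume a c :=
    fun _ _ _ => (by fun_prop : Continuous _).intervalIntegrable _ _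
  have hwindow : ∀ t, 0 ≤ t → ∫ s in max (t - 1) 0..t, exp (-δ * (t - s)) * h s ≤ K := by
    refine fun t ht => le_trans (integral_mono_on (max_le (by linarith) ht) (hint _ _ _)
      (hh.intervalIntegrable _ _) fun s hs => ?_) (hK t ht)
    exact mul_le_of_le_one_left (hh0 s) (exp_le_one_iff.2 (by nlinarith [hs.2]))
  have hK_le : K ≤ K / (1 - E) := le_div_self hK0 (by linarith) (by linarith [exp_pos (-δ)])
  -- `K / (1 - E)` is the fixed point of `x ↦ E * x + K`: each unit window farther back
  -- costs a factor `E`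
  suffices ∀ n : ℕ, ∀ t : ℝ, 0 ≤ t → t ≤ n →
      ∫ s in (0:ℝ)..t, exp (-δ * (t - s)) * h s ≤ K / (1 - E) from this ⌈t⌉₊ t ht (Nat.le_ceil t)
  have hsmall : ∀ t, 0 ≤ t → t ≤ 1 →
      ∫ s in (0:ℝ)..t, exp (-δ * (t - s)) * h s ≤ K / (1 - E) := fun t ht ht1 => by
    have := hwindow t ht
    rw [max_eq_right (by linarith)] at this
    linarith
  intro n
  induction n with
  | zero => exact fun t ht htn => hsmall t ht (by push_cast at htn; linarith)
  | succ n ih =>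
    intro t ht htn
    rcases le_or_gt t 1 with ht1 | ht1
    · exact hsmall t ht ht1
    · have hshift : ∫ s in (0:ℝ)..(t - 1), exp (-δ * (t - s)) * h s =
          E * ∫ s in (0:ℝ)..(t - 1), exp (-δ * (t - 1 - s)) * h s := by
        rw [← intervalIntegral.integral_const_mul]
        refine integral_congr fun s _ => ?_
        simp only [E, ← mul_assoc, ← exp_add]
        ring_nf
      have := hwindow t ht
      rw [max_eq_left (by linarith)] at this
      rw [← integral_add_adjacent_intervals (hint t 0 (t - 1)) (hint t (t - 1) t), hshift]
      have hrec := ih (t - 1) (by linarith) (by push_cast at htn; linarith)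
      calc E * (∫ s in (0:ℝ)..(t - 1), exp (-δ * (t - 1 - s)) * h s) +
            ∫ s in (t - 1)..t, exp (-δ * (t - s)) * h s
          ≤ E * (K / (1 - E)) + K :=
            add_le_add (mul_le_mul_of_nonneg_left hrec (exp_pos _).le) this
        _ = K / (1 - E) := by field_simp [(by linarith : 1 - E ≠ 0)]; ring

theorem exists_bound_of_renewal {g v : ℝ → ℝ} {M δ b : ℝ} (hg : Continuous g)
    (hg0 : ∀ s, 0 ≤ g s) (hδ : 0 < δ) (hdecay : ∀ t, 0 ≤ t → g t ≤ M * exp (-δ * t))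
    (hF : ∀ t, 0 ≤ t → ∫ s in (0:ℝ)..t, g s ≤ 1) (hb : 1 ≤ b)
    (hmass : 0 < ∫ s in (1:ℝ)..b, g s) (hv : Continuous v) (hv0 : ∀ s, 0 ≤ v s)
    (heq : ∀ t, 0 ≤ t → v t = g t + ∫ s in (0:ℝ)..t, v (t - s) * g s) :
    ∃ B, ∀ t, 0 ≤ t → v t ≤ B := by
  obtain ⟨K, hK⟩ := exists_window_bound_of_renewal hg hg0 hF hb hmass hv hv0 heq
  have hM : 0 ≤ M := by simpa using (hg0 0).trans (hdecay 0 le_rfl)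
  refine ⟨M + M * (K / (1 - exp (-δ))), fun t ht => ?_⟩
  have hconv : ∫ s in (0:ℝ)..t, v (t - s) * g s ≤
      M * ∫ s in (0:ℝ)..t, exp (-δ * (t - s)) * v s := calc
    ∫ s in (0:ℝ)..t, v (t - s) * g s ≤ ∫ s in (0:ℝ)..t, M * (exp (-δ * s) * v (t - s)) := by
      refine integral_mono_on ht ((by fun_prop : Continuous _).intervalIntegrable _ _)
        ((by fun_prop : Continuous _).intervalIntegrable _ _) fun s hs => ?_
      calc v (t - s) * g s ≤ v (t - s) * (M * exp (-δ * s)) :=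
            mul_le_mul_of_nonneg_left (hdecay s hs.1) (hv0 _)
        _ = M * (exp (-δ * s) * v (t - s)) := by ring
    _ = M * ∫ s in (0:ℝ)..t, exp (-δ * (t - s)) * v s := by
      rw [intervalIntegral.integral_const_mul,
        ← integral_comp_sub_left_self (fun s => exp (-δ * (t - s)) * v s)]
      simp only [sub_sub_cancel]
  calc v t = g t + ∫ s in (0:ℝ)..t, v (t - s) * g s := heq t ht
    _ ≤ M + M * (K / (1 - exp (-δ))) := add_le_add
        ((hdecay t ht).trans (mul_le_of_le_one_right hM (exp_le_one_iff.2 (by nlinarith))))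
        (hconv.trans (mul_le_mul_of_nonneg_left
          (integral_exp_mul_le_of_window hδ hv hv0 hK ht) hM))

theorem exists_continuous_integral_eq_of_contDiffOn_Ici {k : ℝ → ℝ}
    (hk : ContDiffOn ℝ 1 k (Ici 0)) :
    ∃ k' : ℝ → ℝ, Continuous k' ∧ ∀ u, 0 ≤ u → k u = k 0 + ∫ r in (0:ℝ)..u, k' r := by
  have hk'c : Continuous fun r => derivWithin k (Ici 0) (max r 0) :=
    (hk.continuousOn_derivWithin (uniqueDiffOn_Ici 0) le_rfl).comp_continuous
      (continuous_id.max continuous_const) fun r => le_max_right r 0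
  refine ⟨_, hk'c, fun u hu => ?_⟩
  have hderiv : ∀ r ∈ Ioo 0 u, HasDerivAt k (derivWithin k (Ici 0) (max r 0)) r := by
    intro r hr
    have hr0 : Ici (0:ℝ) ∈ nhds r := Ici_mem_nhds hr.1
    rw [max_eq_left hr.1.le, derivWithin_of_mem_nhds hr0]
    exact (((hk.differentiableOn one_ne_zero) r hr.1.le).differentiableAt hr0).hasDerivAt
  rw [integral_eq_sub_of_hasDerivAt_of_le hu (hk.continuousOn.mono Icc_subset_Ici_self) hderiv
    (hk'c.intervalIntegrable _ _)]
  ring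

theorem contDiff_integral_of_continuous {ψ : ℝ → ℝ} (hψ : Continuous ψ) :
    ContDiff ℝ 1 fun t => ∫ r in (0:ℝ)..t, ψ r := by
  have hderiv : deriv (fun t => ∫ r in (0:ℝ)..t, ψ r) = ψ :=
    funext fun t => hψ.deriv_integral _ 0 t
  exact contDiff_one_iff_deriv.2 ⟨differentiable_integral_of_continuous hψ, by rwa [hderiv]⟩

theorem contDiffOn_integral_comp_sub_mul {f k : ℝ → ℝ} (hf : Continuous f)
    (hk : ContDiffOn ℝ 1 k (Ici 0)) :
    ContDiffOn ℝ 1 (fun t => ∫ s in (0:ℝ)..t, f (t - s) * k s) (Ici 0) := by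
  obtain ⟨k', hk'c, hk'⟩ := exists_continuous_integral_eq_of_contDiffOn_Ici hk
  have hinner : ∀ t, Continuous fun s => ∫ u in (0:ℝ)..(t - s), f s * k' u := fun t =>
    continuous_parametric_intervalIntegral_of_continuous (by fun_prop) (by fun_prop)
  have hconv : Continuous fun r => ∫ s in (0:ℝ)..r, f s * k' (r - s) :=
    continuous_parametric_intervalIntegral_of_continuous (by fun_prop) continuous_id
  have hψ : Continuous fun r => f r * k 0 + ∫ s in (0:ℝ)..r, f s * k' (r - s) :=
    (hf.mul continuous_const).add hconv
  -- expanding `k (t - s) = k 0 + ∫₀^{t-s} k'` and swapping the order of integration exhibits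
  -- the convolution as a primitive of a continuous function
  refine (contDiff_integral_of_continuous hψ).contDiffOn.congr fun t (ht : 0 ≤ t) => ?_
  calc ∫ s in (0:ℝ)..t, f (t - s) * k s
      = ∫ s in (0:ℝ)..t, f s * k (t - s) := by
        rw [← integral_comp_sub_left_self (fun s => f s * k (t - s))]
        simp only [sub_sub_cancel]
    _ = ∫ s in (0:ℝ)..t, (f s * k 0 + ∫ u in (0:ℝ)..(t - s), f s * k' u) := by
        refine integral_congr fun s hs => ?_
        rw [uIcc_of_le ht] at hs
        simp only [hk' (t - s) (by linarith [hs.2]), intervalIntegral.integral_const_mul]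
        ring
    _ = (∫ s in (0:ℝ)..t, f s * k 0) + ∫ s in (0:ℝ)..t, ∫ u in (0:ℝ)..(t - s), f s * k' u :=
        integral_add ((hf.mul continuous_const).intervalIntegrable _ _)
          ((hinner t).intervalIntegrable _ _)
    _ = (∫ r in (0:ℝ)..t, f r * k 0) + ∫ r in (0:ℝ)..t, ∫ s in (0:ℝ)..r, f s * k' (r - s) := by
        rw [integral_integral_triangle_swap (k := fun s u => f s * k' u) (by fun_prop) ht]
    _ = ∫ r in (0:ℝ)..t, (f r * k 0 + ∫ s in (0:ℝ)..r, f s * k' (r - s)) :=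
        (integral_add ((hf.mul continuous_const).intervalIntegrable _ _)
          (hconv.intervalIntegrable _ _)).symm

section Lattice

variable {Λ : Type*} [Fintype Λ]

def kernelMass (k : ℝ → Λ → ℝ) (t : ℝ) : ℝ := ∫ s in (0:ℝ)..t, ∑ y, k s y

theorem kernelMass_mono {k : ℝ → Λ → ℝ} (hk : ∀ y, Continuous fun s => k s y)
    (hk0 : ∀ s y, 0 ≤ k s y) {s t : ℝ} (hs : 0 ≤ s) (hst : s ≤ t) :
    kernelMass k s ≤ kernelMass k t :=
  integral_mono_interval le_rfl hs hst (ae_of_all _ fun r => Finset.sum_nonneg fun y _ => hk0 r y)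
    ((continuous_finsetSum _ fun y _ => hk y).intervalIntegrable _ _)

theorem kernelMass_nonneg {k : ℝ → Λ → ℝ} (hk : ∀ y, Continuous fun s => k s y)
    (hk0 : ∀ s y, 0 ≤ k s y) {t : ℝ} (ht : 0 ≤ t) : 0 ≤ kernelMass k t := by
  simpa [kernelMass] using kernelMass_mono hk hk0 le_rfl ht

variable [AddCommGroup Λ]

def renewalConv (k f : ℝ → Λ → ℝ) (t : ℝ) (x : Λ) : ℝ :=
  ∫ s in (0:ℝ)..t, ∑ y, f (t - s) (x - y) * k s y

-- Only `G` on `[0, ∞)` enters the equation; asking for continuity on all of `ℝ` (as for the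
-- clamped `G (max t 0)`) keeps every integrand below continuous.
def IsRenewalSolution (k G : ℝ → Λ → ℝ) : Prop :=
  (∀ x, Continuous fun t => G t x) ∧ ∀ t, 0 ≤ t → ∀ x, G t x = k t x + renewalConv k G t x

variable {k f f' : ℝ → Λ → ℝ}

theorem continuous_renewalConv_integrand (hk : ∀ y, Continuous fun s => k s y)
    (hf : ∀ y, Continuous fun s => f s y) (t : ℝ) (x : Λ) :
    Continuous fun s => ∑ y, f (t - s) (x - y) * k s y :=
  continuous_finsetSum _ fun y _ =>
    ((hf (x - y)).comp (continuous_const.sub continuous_id)).mul (hk y)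

theorem continuous_renewalConv (hk : ∀ y, Continuous fun s => k s y)
    (hf : ∀ y, Continuous fun s => f s y) (x : Λ) : Continuous fun t => renewalConv k f t x :=
  continuous_parametric_intervalIntegral_of_continuous
    (continuous_finsetSum _ fun y _ =>
      ((hf (x - y)).comp (continuous_fst.sub continuous_snd)).mul ((hk y).comp continuous_snd))
    continuous_id

theorem renewalConv_congr {k' : ℝ → Λ → ℝ} (hk : ∀ s, 0 ≤ s → k s = k' s)
    (hf : ∀ s, 0 ≤ s → f s = f' s) {t : ℝ} (ht : 0 ≤ t) (x : Λ) :
    renewalConv k f t x = renewalConv k' f' t x := by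
  refine integral_congr fun s hs => ?_
  rw [uIcc_of_le ht] at hs
  simp only [hk s hs.1, hf (t - s) (by linarith [hs.2])]

theorem sum_renewalConv (hk : ∀ y, Continuous fun s => k s y)
    (hf : ∀ y, Continuous fun s => f s y) (t : ℝ) :
    ∑ x, renewalConv k f t x = ∫ s in (0:ℝ)..t, (∑ x, f (t - s) x) * ∑ y, k s y := by
  simp only [renewalConv]
  rw [← integral_finsetSum fun x _ =>
    (continuous_renewalConv_integrand hk hf t x).intervalIntegrable _ _]
  refine integral_congr fun s _ => ?_
  rw [Finset.sum_comm, Finset.mul_sum]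
  refine Finset.sum_congr rfl fun y _ => ?_
  rw [← Finset.sum_mul]
  exact congrArg (· * k s y) ((Equiv.subRight y).sum_comp (f (t - s)))

theorem abs_renewalConv_sub_le (hk : ∀ y, Continuous fun s => k s y) (hk0 : ∀ s y, 0 ≤ k s y)
    (hf : ∀ y, Continuous fun s => f s y) (hf' : ∀ y, Continuous fun s => f' s y) {t : ℝ}
    (ht : 0 ≤ t) (x : Λ) :
    |renewalConv k f t x - renewalConv k f' t x| ≤
      renewalConv k (fun s y => |f s y - f' s y|) t x := by
  have hdiff : ∀ y, Continuous fun s => |f s y - f' s y| := fun y => ((hf y).sub (hf' y)).abs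
  rw [renewalConv, renewalConv, ← integral_sub
    ((continuous_renewalConv_integrand hk hf t x).intervalIntegrable _ _)
    ((continuous_renewalConv_integrand hk hf' t x).intervalIntegrable _ _)]
  refine (abs_integral_le_integral_abs ht).trans (integral_mono_on ht
    (((continuous_renewalConv_integrand hk hf t x).sub
      (continuous_renewalConv_integrand hk hf' t x)).abs.intervalIntegrable _ _)
    ((continuous_renewalConv_integrand hk hdiff t x).intervalIntegrable _ _) fun s _ => ?_)
  rw [← Finset.sum_sub_distrib]
  refine (Finset.abs_sum_le_sum_abs _ _).trans (Finset.sum_le_sum fun y _ => ?_)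
  rw [← sub_mul, abs_mul, abs_of_nonneg (hk0 s y)]

theorem renewalConv_nonneg (hk0 : ∀ s y, 0 ≤ k s y) {t : ℝ} (ht : 0 ≤ t)
    (hf : ∀ s ∈ Icc 0 t, ∀ y, 0 ≤ f s y) (x : Λ) : 0 ≤ renewalConv k f t x :=
  integral_nonneg ht fun s hs => Finset.sum_nonneg fun y _ =>
    mul_nonneg (hf _ ⟨by linarith [hs.2], by linarith [hs.1]⟩ _) (hk0 s y)

theorem renewalConv_le (hk : ∀ y, Continuous fun s => k s y) (hk0 : ∀ s y, 0 ≤ k s y)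
    (hf : ∀ y, Continuous fun s => f s y) {t B : ℝ} (ht : 0 ≤ t)
    (hfB : ∀ s ∈ Icc 0 t, ∀ y, f s y ≤ B) (x : Λ) : renewalConv k f t x ≤ B * kernelMass k t := by
  rw [kernelMass, ← intervalIntegral.integral_const_mul]
  refine integral_mono_on ht ((continuous_renewalConv_integrand hk hf t x).intervalIntegrable _ _)
    ((continuous_const.mul (continuous_finsetSum _ fun y _ => hk y)).intervalIntegrable _ _)
    fun s hs => ?_
  rw [Finset.mul_sum]
  exact Finset.sum_le_sum fun y _ => mul_le_mul_of_nonneg_right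
    (hfB _ ⟨by linarith [hs.2], by linarith [hs.1]⟩ _) (hk0 s y)

def neumannTerm (k : ℝ → Λ → ℝ) : ℕ → ℝ → Λ → ℝ
  | 0 => k
  | n + 1 => renewalConv k (neumannTerm k n)

theorem continuous_neumannTerm (hk : ∀ y, Continuous fun s => k s y) :
    ∀ n x, Continuous fun t => neumannTerm k n t x
  | 0 => hk
  | n + 1 => continuous_renewalConv hk (continuous_neumannTerm hk n)

theorem neumannTerm_mem_Icc (hk : ∀ y, Continuous fun s => k s y) (hk0 : ∀ s y, 0 ≤ k s y)
    {T A : ℝ} (hA : ∀ s ∈ Icc 0 T, ∀ y, k s y ≤ A) :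
    ∀ n, ∀ s ∈ Icc 0 T, ∀ x, neumannTerm k n s x ∈ Icc 0 (A * kernelMass k T ^ n)
  | 0 => fun s hs x => ⟨hk0 s x, by simpa [neumannTerm] using hA s hs x⟩
  | n + 1 => fun s hs x => by
    have ih := neumannTerm_mem_Icc hk hk0 hA n
    have hsub : ∀ r ∈ Icc 0 s, r ∈ Icc 0 T := fun r hr => ⟨hr.1, hr.2.trans hs.2⟩
    refine ⟨renewalConv_nonneg hk0 hs.1 (fun r hr y => (ih r (hsub r hr) y).1) x, ?_⟩
    calc neumannTerm k (n + 1) s x ≤ A * kernelMass k T ^ n * kernelMass k s :=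
          renewalConv_le hk hk0 (continuous_neumannTerm hk n) hs.1
            (fun r hr y => (ih r (hsub r hr) y).2) x
      _ ≤ A * kernelMass k T ^ n * kernelMass k T :=
          mul_le_mul_of_nonneg_left (kernelMass_mono hk hk0 hs.1 hs.2)
            ((ih s hs x).1.trans (ih s hs x).2)
      _ = A * kernelMass k T ^ (n + 1) := by ring

theorem exists_neumannTerm_bound (hk : ∀ y, Continuous fun s => k s y)
    (hk0 : ∀ s y, 0 ≤ k s y) (T : ℝ) :
    ∃ A, ∀ n, ∀ s ∈ Icc 0 T, ∀ x, neumannTerm k n s x ∈ Icc 0 (A * kernelMass k T ^ n) := by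
  obtain ⟨A, hA⟩ := isCompact_Icc.exists_bound_of_continuousOn
    (continuous_finsetSum Finset.univ fun y _ => hk y).continuousOn
  refine ⟨A, neumannTerm_mem_Icc hk hk0 fun s hs y => ?_⟩
  calc k s y ≤ ∑ y, k s y := Finset.single_le_sum (fun y _ => hk0 s y) (Finset.mem_univ y)
    _ ≤ A := (le_abs_self _).trans (hA s hs)

def neumannSum (k : ℝ → Λ → ℝ) (t : ℝ) (x : Λ) : ℝ := ∑' n, neumannTerm k n (max t 0) x

theorem hasSum_neumannTerm (hk : ∀ y, Continuous fun s => k s y) (hk0 : ∀ s y, 0 ≤ k s y)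
    (hF : ∀ t, 0 ≤ t → kernelMass k t < 1) {t : ℝ} (ht : 0 ≤ t) (x : Λ) :
    HasSum (fun n => neumannTerm k n t x) (neumannSum k t x) := by
  obtain ⟨A, hA⟩ := exists_neumannTerm_bound hk hk0 t
  have hsum : Summable fun n => neumannTerm k n t x :=
    .of_nonneg_of_le (fun n => (hA n t ⟨ht, le_rfl⟩ x).1) (fun n => (hA n t ⟨ht, le_rfl⟩ x).2)
      ((summable_geometric_of_lt_one (kernelMass_nonneg hk hk0 ht) (hF t ht)).mul_left A)
  simpa [neumannSum, max_eq_left ht] using hsum.hasSum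

theorem neumannSum_nonneg (hk : ∀ y, Continuous fun s => k s y) (hk0 : ∀ s y, 0 ≤ k s y)
    (t : ℝ) (x : Λ) : 0 ≤ neumannSum k t x := by
  obtain ⟨A, hA⟩ := exists_neumannTerm_bound hk hk0 (max t 0)
  exact tsum_nonneg fun n => (hA n _ ⟨le_max_right t 0, le_rfl⟩ x).1

theorem continuous_neumannSum (hk : ∀ y, Continuous fun s => k s y) (hk0 : ∀ s y, 0 ≤ k s y)
    (hF : ∀ t, 0 ≤ t → kernelMass k t < 1) (x : Λ) : Continuous fun t => neumannSum k t x := by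
  refine continuous_iff_continuousAt.2 fun t => ?_
  have hT : 0 ≤ |t| + 1 := by positivity
  obtain ⟨A, hA⟩ := exists_neumannTerm_bound hk hk0 (|t| + 1)
  have hterm : ∀ n, Continuous fun s => neumannTerm k n (max s 0) x := fun n =>
    (continuous_neumannTerm hk n x).comp (continuous_id.max continuous_const)
  have hbound : ∀ n, ∀ s ∈ Iio (|t| + 1),
      ‖neumannTerm k n (max s 0) x‖ ≤ A * kernelMass k (|t| + 1) ^ n := fun n s hs => by
    have hs' : max s 0 ∈ Icc 0 (|t| + 1) := ⟨le_max_right s 0, max_le (le_of_lt hs) hT⟩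
    rw [Real.norm_of_nonneg (hA n _ hs' x).1]
    exact (hA n _ hs' x).2
  exact (continuousOn_tsum (fun n => (hterm n).continuousOn)
    ((summable_geometric_of_lt_one (kernelMass_nonneg hk hk0 hT) (hF _ hT)).mul_left A)
    hbound).continuousAt (Iio_mem_nhds (by linarith [le_abs_self t]))

theorem neumannSum_eq (hk : ∀ y, Continuous fun s => k s y) (hk0 : ∀ s y, 0 ≤ k s y)
    (hF : ∀ t, 0 ≤ t → kernelMass k t < 1) {t : ℝ} (ht : 0 ≤ t) (x : Λ) :
    neumannSum k t x = k t x + renewalConv k (neumannSum k) t x := by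
  obtain ⟨A, hA⟩ := exists_neumannTerm_bound hk hk0 t
  set m := kernelMass k t
  have hgeom := summable_geometric_of_lt_one (kernelMass_nonneg hk hk0 ht) (hF t ht)
  have hmem : ∀ s ∈ uIoc 0 t, t - s ∈ Icc 0 t := fun s hs => by
    rw [uIoc_of_le ht] at hs
    exact ⟨by linarith [hs.2], by linarith [hs.1]⟩
  have htail : HasSum (fun n => neumannTerm k (n + 1) t x) (renewalConv k (neumannSum k) t x) := by
    refine hasSum_integral_of_dominated_convergence (fun n s => A * m ^ n * ∑ y, k s y)
      (fun n => (continuous_renewalConv_integrand hk (continuous_neumannTerm hk n) t x)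
        |>.aestronglyMeasurable) (fun n => ae_of_all _ fun s hs => ?_)
      (ae_of_all _ fun s _ => (hgeom.mul_left A).mul_right _) ?_
      (ae_of_all _ fun s hs => hasSum_sum fun y _ =>
        (hasSum_neumannTerm hk hk0 hF (hmem s hs).1 (x - y)).mul_right _)
    · rw [Real.norm_of_nonneg (Finset.sum_nonneg fun y _ =>
        mul_nonneg (hA n _ (hmem s hs) _).1 (hk0 s y)), Finset.mul_sum]
      exact Finset.sum_le_sum fun y _ =>
        mul_le_mul_of_nonneg_right (hA n _ (hmem s hs) _).2 (hk0 s y)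
    · simp_rw [tsum_mul_right]
      exact (continuous_const.mul (continuous_finsetSum _ fun y _ => hk y)).intervalIntegrable _ _
  have := (hasSum_nat_add_iff (f := fun n => neumannTerm k n t x) 1).1 htail
  rw [(hasSum_neumannTerm hk hk0 hF ht x).unique this, Finset.sum_range_one, add_comm]
  rfl

theorem isRenewalSolution_neumannSum (hk : ∀ y, Continuous fun s => k s y)
    (hk0 : ∀ s y, 0 ≤ k s y) (hF : ∀ t, 0 ≤ t → kernelMass k t < 1) :
    IsRenewalSolution k (neumannSum k) :=
  ⟨continuous_neumannSum hk hk0 hF, fun _ ht => neumannSum_eq hk hk0 hF ht⟩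

namespace IsRenewalSolution

variable {G G' : ℝ → Λ → ℝ}

theorem unique (hk : ∀ y, Continuous fun s => k s y) (hk0 : ∀ s y, 0 ≤ k s y)
    (hF : ∀ t, 0 ≤ t → kernelMass k t < 1) (hG : IsRenewalSolution k G)
    (hG' : IsRenewalSolution k G') {t : ℝ} (ht : 0 ≤ t) : G t = G' t := by
  have hdiff : ∀ x, Continuous fun s => |G s x - G' s x| := fun x => ((hG.1 x).sub (hG'.1 x)).abs
  set w : ℝ → ℝ := fun t => ∑ x, |G t x - G' t x|
  have hw : ∀ t, 0 ≤ t → w t ≤ ∫ s in (0:ℝ)..t, w (t - s) * ∑ y, k s y := fun t ht => calc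
    w t = ∑ x, |renewalConv k G t x - renewalConv k G' t x| := by
        simp only [w, hG.2 t ht, hG'.2 t ht, add_sub_add_left_eq_sub]
    _ ≤ ∑ x, renewalConv k (fun s y => |G s y - G' s y|) t x :=
        Finset.sum_le_sum fun x _ => abs_renewalConv_sub_le hk hk0 hG.1 hG'.1 ht x
    _ = ∫ s in (0:ℝ)..t, w (t - s) * ∑ y, k s y := sum_renewalConv hk hdiff t
  have hw0 := nonpos_of_le_integral_comp_sub_mul (continuous_finsetSum _ fun x _ => hdiff x)
    (continuous_finsetSum _ fun y _ => hk y) (fun s => Finset.sum_nonneg fun y _ => hk0 s y)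
    hF hw ht
  funext x
  have := Finset.single_le_sum (fun y _ => abs_nonneg (G t y - G' t y)) (Finset.mem_univ x)
  exact sub_eq_zero.1 (abs_nonpos_iff.1 (this.trans hw0))

theorem exists_bound {M δ b : ℝ} (hk : ∀ y, Continuous fun s => k s y)
    (hk0 : ∀ s y, 0 ≤ k s y) (hδ : 0 < δ) (hdecay : ∀ t, 0 ≤ t → ∑ y, k t y ≤ M * exp (-δ * t))
    (hF : ∀ t, 0 ≤ t → kernelMass k t ≤ 1) (hb : 1 ≤ b)
    (hmass : 0 < ∫ s in (1:ℝ)..b, ∑ y, k s y) (hG : IsRenewalSolution k G)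
    (hG0 : ∀ t x, 0 ≤ G t x) : ∃ B, ∀ t, 0 ≤ t → ∀ x, G t x ≤ B := by
  have heq : ∀ t, 0 ≤ t → ∑ x, G t x =
      ∑ y, k t y + ∫ s in (0:ℝ)..t, (∑ x, G (t - s) x) * ∑ y, k s y := fun t ht => by
    simp only [hG.2 t ht, Finset.sum_add_distrib, sum_renewalConv hk hG.1]
  obtain ⟨B, hB⟩ := exists_bound_of_renewal (continuous_finsetSum _ fun y _ => hk y)
    (fun s => Finset.sum_nonneg fun y _ => hk0 s y) hδ hdecay hF hb hmass
    (continuous_finsetSum _ fun x _ => hG.1 x) (fun s => Finset.sum_nonneg fun x _ => hG0 s x) heq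
  exact ⟨B, fun t ht x =>
    (Finset.single_le_sum (fun y _ => hG0 t y) (Finset.mem_univ x)).trans (hB t ht)⟩

theorem contDiffOn (hk : ∀ y, Continuous fun s => k s y)
    (hk1 : ∀ y, ContDiffOn ℝ 1 (fun t => k t y) (Ici 0)) (hG : IsRenewalSolution k G) (x : Λ) :
    ContDiffOn ℝ 1 (fun t => G t x) (Ici 0) := by
  refine ((hk1 x).add (ContDiffOn.sum (s := Finset.univ) fun y _ =>
    contDiffOn_integral_comp_sub_mul (hG.1 (x - y)) (hk1 y))).congr fun t (ht : 0 ≤ t) => ?_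
  rw [hG.2 t ht x, renewalConv, integral_finsetSum fun y _ =>
    Continuous.intervalIntegrable (u := fun s => G (t - s) (x - y) * k s y)
      (((hG.1 (x - y)).comp (continuous_const.sub continuous_id)).mul (hk y)) _ _]

end IsRenewalSolution

end Lattice

section Green

variable {L : ℕ} [NeZero L] {p : ℝ → ZMod L → ℝ}

theorem IsGreen.isRenewalSolution_clamp {G : ℝ → ZMod L → ℝ} (hG : IsGreen L p G) :
    IsRenewalSolution (fun t y => p (max t 0) y) (fun t x => G (max t 0) x) := by
  refine ⟨fun x => (hG.1 x).comp_continuous (continuous_id.max continuous_const)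
    fun t => le_max_right t 0, fun t ht x => ?_⟩
  rw [renewalConv_congr (k' := p) (f' := G) (fun s hs => by simp only [max_eq_left hs])
    (fun s hs => by simp only [max_eq_left hs]) ht]
  simp only [max_eq_left ht]
  exact hG.2.2 t ht x

theorem isGreen_of_isRenewalSolution {G : ℝ → ZMod L → ℝ}
    (hG : IsRenewalSolution (fun t y => p (max t 0) y) G) :
    IsGreen L p fun t x => if 0 ≤ t then G t x else 0 := by
  refine ⟨fun x => (hG.1 x).continuousOn.congr fun t (ht : 0 ≤ t) => if_pos ht,
    fun t ht x => if_neg (not_le.2 ht), fun t (ht : 0 ≤ t) x => ?_⟩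
  show (if 0 ≤ t then G t x else 0) =
    p t x + renewalConv p (fun t x => if 0 ≤ t then G t x else 0) t x
  rw [if_pos ht, hG.2 t ht x]
  congr 1
  · simp only [max_eq_left ht]
  exact renewalConv_congr (fun s hs => by simp only [max_eq_left hs])
    (fun s hs => funext fun y => (if_pos hs).symm) ht x

namespace RenewalHyp

variable {C₀ δ₀ γ₂ : ℝ}

theorem continuous_clamp (hp : RenewalHyp L p C₀ δ₀ γ₂) (y : ZMod L) :
    Continuous fun t => p (max t 0) y :=
  (hp.1 y).continuousOn.comp_continuous (continuous_id.max continuous_const)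
    fun t => le_max_right t 0

theorem clamp_nonneg (hp : RenewalHyp L p C₀ δ₀ γ₂) (t : ℝ) (y : ZMod L) : 0 ≤ p (max t 0) y :=
  (hp.2.1 _ (le_max_right t 0) y).1

theorem contDiffOn_clamp (hp : RenewalHyp L p C₀ δ₀ γ₂) (y : ZMod L) :
    ContDiffOn ℝ 1 (fun t => p (max t 0) y) (Ici 0) :=
  (hp.1 y).congr fun t (ht : 0 ≤ t) => by rw [max_eq_left ht]

theorem kernelMass_clamp_lt_one (hp : RenewalHyp L p C₀ δ₀ γ₂) (t : ℝ) (ht : 0 ≤ t) :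
    kernelMass (fun t y => p (max t 0) y) t < 1 := by
  refine lt_of_eq_of_lt (integral_congr fun s hs => ?_) (hp.2.2.2 t ht)
  rw [uIcc_of_le ht] at hs
  simp only [max_eq_left hs.1]

theorem sum_clamp_le_exp (hp : RenewalHyp L p C₀ δ₀ γ₂) (t : ℝ) (ht : 0 ≤ t) :
    ∑ y, p (max t 0) y ≤ (∑ y, C₀ * exp (-γ₂ * |(zrep L y : ℝ)|)) * exp (-δ₀ * t) := by
  rw [max_eq_left ht, Finset.sum_mul]
  refine Finset.sum_le_sum fun y _ => (hp.2.1 t ht y).2.2.trans_eq ?_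
  rw [mul_assoc, ← exp_add]
  ring_nf

theorem exists_mass_after_one (hp : RenewalHyp L p C₀ δ₀ γ₂) (hδ₀ : 0 < δ₀) :
    ∃ b, 1 ≤ b ∧ 0 < ∫ s in (1:ℝ)..b, ∑ y, p (max s 0) y := by
  set g : ℝ → ℝ := fun s => ∑ y, p (max s 0) y
  have hg : Continuous g := continuous_finsetSum _ fun y _ => hp.continuous_clamp y
  have hint : IntegrableOn g (Ioi 0) := by
    refine Integrable.mono' ((exp_neg_integrableOn_Ioi 0 hδ₀).const_mul
      (∑ y, C₀ * exp (-γ₂ * |(zrep L y : ℝ)|)))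
      hg.aestronglyMeasurable.restrict ((ae_restrict_iff' measurableSet_Ioi).2
        (ae_of_all _ fun t (ht : 0 < t) => ?_))
    rw [Real.norm_of_nonneg (Finset.sum_nonneg fun y _ => hp.clamp_nonneg t y)]
    exact hp.sum_clamp_le_exp t ht.le
  have htotal : ∫ s in Ioi (0:ℝ), g s = 1 := by
    rw [← hp.2.2.1]
    exact setIntegral_congr_fun measurableSet_Ioi fun t (ht : 0 < t) => by
      simp only [g, max_eq_left ht.le]
  have hlim := intervalIntegral_tendsto_integral_Ioi 0 hint Filter.tendsto_id
  rw [htotal] at hlim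
  obtain ⟨b, hb⟩ := ((tendsto_order.1 hlim).1 _ (hp.kernelMass_clamp_lt_one 1 zero_le_one)
    |>.and (Filter.eventually_ge_atTop 1)).exists
  refine ⟨b, hb.2, ?_⟩
  rw [← integral_interval_sub_left (hg.intervalIntegrable 0 b) (hg.intervalIntegrable 0 1)]
  exact sub_pos.2 hb.1

end RenewalHyp

namespace IsGreen

variable {C₀ δ₀ γ₂ : ℝ} {G : ℝ → ZMod L → ℝ}

theorem eq_neumannSum (hp : RenewalHyp L p C₀ δ₀ γ₂) (hG : IsGreen L p G) {t : ℝ} (ht : 0 ≤ t)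
    (x : ZMod L) : G t x = neumannSum (fun t y => p (max t 0) y) t x := by
  have h := hG.isRenewalSolution_clamp.unique hp.continuous_clamp hp.clamp_nonneg
    hp.kernelMass_clamp_lt_one
    (isRenewalSolution_neumannSum hp.continuous_clamp hp.clamp_nonneg hp.kernelMass_clamp_lt_one)
    ht
  simpa only [max_eq_left ht] using congrFun h x

theorem nonneg (hp : RenewalHyp L p C₀ δ₀ γ₂) (hG : IsGreen L p G) {t : ℝ} (ht : 0 ≤ t)
    (x : ZMod L) : 0 ≤ G t x :=
  (hG.eq_neumannSum hp ht x).symm ▸ neumannSum_nonneg hp.continuous_clamp hp.clamp_nonneg t x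

theorem exists_abs_le (hp : RenewalHyp L p C₀ δ₀ γ₂) (hδ₀ : 0 < δ₀) (hG : IsGreen L p G) :
    ∃ B, ∀ t x, |G t x| ≤ B := by
  have hG0 : ∀ t x, 0 ≤ G (max t 0) x := fun t x => hG.nonneg hp (le_max_right t 0) x
  obtain ⟨b, hb, hmass⟩ := hp.exists_mass_after_one hδ₀
  obtain ⟨B, hB⟩ := hG.isRenewalSolution_clamp.exists_bound hp.continuous_clamp hp.clamp_nonneg
    hδ₀ hp.sum_clamp_le_exp (fun t ht => (hp.kernelMass_clamp_lt_one t ht).le) hb hmass hG0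
  refine ⟨B, fun t x => ?_⟩
  rcases le_or_gt 0 t with ht | ht
  · have hBt := hB t ht x
    rw [max_eq_left ht] at hBt
    rwa [abs_of_nonneg (hG.nonneg hp ht x)]
  · rw [hG.2.1 t ht x, abs_zero]
    exact (hG0 0 x).trans (hB 0 le_rfl x)

theorem contDiffOn (hp : RenewalHyp L p C₀ δ₀ γ₂) (hG : IsGreen L p G) (x : ZMod L) :
    ContDiffOn ℝ 1 (fun t => G t x) (Ici 0) :=
  (hG.isRenewalSolution_clamp.contDiffOn hp.continuous_clamp hp.contDiffOn_clamp x).congr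
    fun t (ht : 0 ≤ t) => by simp only [max_eq_left ht]

end IsGreen

end Green

theorem stmt13_general (L : ℕ) [NeZero L] (p : ℝ → ZMod L → ℝ) (C₀ δ₀ γ₂ : ℝ)
    (hδ₀ : 0 < δ₀) (hp : RenewalHyp L p C₀ δ₀ γ₂) :
    (∃! G : ℝ → ZMod L → ℝ, IsGreen L p G) ∧
    ∀ G : ℝ → ZMod L → ℝ, IsGreen L p G →
      (∀ t ≥ (0:ℝ), ∀ x : ZMod L, 0 ≤ G t x) ∧
      (∃ B : ℝ, ∀ t : ℝ, ∀ x : ZMod L, |G t x| ≤ B) ∧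
      (∀ x : ZMod L, ContDiffOn ℝ 1 (fun t => G t x) (Set.Ici 0)) := by
  have hsol := isRenewalSolution_neumannSum hp.continuous_clamp hp.clamp_nonneg
    hp.kernelMass_clamp_lt_one
  refine ⟨⟨_, isGreen_of_isRenewalSolution hsol, fun G hG => funext fun t => funext fun x => ?_⟩,
    fun G hG => ⟨fun t ht x => hG.nonneg hp ht x, hG.exists_abs_le hp hδ₀, hG.contDiffOn hp⟩⟩
  rcases le_or_gt 0 t with ht | ht
  · exact (hG.eq_neumannSum hp ht x).trans (if_pos ht).symm
  · exact (hG.2.1 t ht x).trans (if_neg (not_le.2 ht)).symm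

/-- Proposition B.1, existence part: the renewal equation has a unique
continuous solution, which is nonnegative, bounded, and continuously differentiable. -/
theorem stmt13 (L : ℕ) [NeZero L] (hL : 1 ≤ L) (p : ℝ → ZMod L → ℝ) (C₀ δ₀ γ₂ : ℝ)
    (hC₀ : 0 < C₀) (hδ₀ : 0 < δ₀) (hγ₂ : 0 < γ₂) (hp : RenewalHyp L p C₀ δ₀ γ₂) :
    (∃! G : ℝ → ZMod L → ℝ, IsGreen L p G) ∧
    ∀ G : ℝ → ZMod L → ℝ, IsGreen L p G →
      (∀ t ≥ (0:ℝ), ∀ x : ZMod L, 0 ≤ G t x) ∧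
      (∃ B : ℝ, ∀ t : ℝ, ∀ x : ZMod L, |G t x| ≤ B) ∧
      (∀ x : ZMod L, ContDiffOn ℝ 1 (fun t => G t x) (Set.Ici 0)) :=
  stmt13_general L p C₀ δ₀ γ₂ hδ₀ hp
end
end
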